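/- arXiv:1911.12992 — 6 statements merged into one kernel-verified Lean document; each statement's English description precedes it below -/
import Mathlib

section
/- For μ-almost every x, liminf_{n→∞} n^{1/α} d(T^n(x), x) ≤ (ess sup g)^{1/α}, where g = dH_α/dμ. -/
open MeasureTheory Filter Set Topology
open scoped ENNReal NNReal

-- counting lemma
lemma count_bound {X : Type*} [MeasurableSpace X] {T : X → X} {μ : Measure X}
    [IsProbabilityMeasure μ] (hT : MeasurePreserving T μ μ) {A : Set X}
    (hA : MeasurableSet A) (K : ℕ) :
    ((K : ℝ≥0∞) + 1) * μ (A ∩ ⋂ j ∈ Finset.Icc 1 K, (T^[j])⁻¹' Aᶜ) ≤ 1 := by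
  set B := A ∩ ⋂ j ∈ Finset.Icc 1 K, (T^[j])⁻¹' Aᶜ with hB
  have hBm : MeasurableSet B := by
    apply hA.inter
    exact MeasurableSet.biInter (Finset.Icc 1 K).countable_toSet
      (fun j _ => (hA.compl.preimage (hT.measurable.iterate j)))
  have hdisj : (Finset.range (K+1) : Set ℕ).PairwiseDisjoint
      (fun i => (T^[i])⁻¹' B) := by
    intro i hi j hj hij
    wlog h : i < j generalizing i j
    · exact (this hj hi hij.symm (by omega)).symm
    simp only [Finset.coe_range, mem_Iio] at hi hj
    refine Set.disjoint_left.2 fun x hxi hxj => ?_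
    have h1 : T^[i] x ∈ B := hxi
    have h2 : T^[j] x ∈ B := hxj
    have hj2 : T^[j] x = T^[j-i] (T^[i] x) := by
      rw [← Function.iterate_add_apply]
      congr 1
      omega
    have h3 : T^[j-i] (T^[i] x) ∉ A := by
      have := h1.2
      simp only [Set.mem_iInter] at this
      exact this (j - i) (Finset.mem_Icc.2 ⟨by omega, by omega⟩)
    exact h3 (hj2 ▸ h2.1)
  have hsum : ∑ i ∈ Finset.range (K+1), μ ((T^[i])⁻¹' B) ≤ 1 := by
    rw [← measure_biUnion_finset hdisj
      (fun i _ => hBm.preimage (hT.measurable.iterate i))]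
    exact prob_le_one
  have heq : ∀ i, μ ((T^[i])⁻¹' B) = μ B := fun i => (hT.iterate i).measure_preimage hBm.nullMeasurableSet
  simp only [heq, Finset.sum_const, Finset.card_range, nsmul_eq_mul] at hsum
  calc ((K : ℝ≥0∞) + 1) * μ B = ((K+1 : ℕ) : ℝ≥0∞) * μ B := by push_cast; ring
  _ ≤ 1 := hsum

lemma bad_bound {X : Type*} [MetricSpace X] [MeasurableSpace X] {T : X → X} {μ : Measure X}
    [IsProbabilityMeasure μ] (hT : MeasurePreserving T μ μ) {A : Set X}
    (hA : MeasurableSet A) {α : ℝ} (hα : 0 < α) {c : ℝ≥0∞} (hc0 : c ≠ 0) (hcT : c ≠ ∞)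
    (hD : EMetric.diam A ≠ ∞) :
    μ {x | x ∈ A ∧ ∀ j : ℕ, 1 ≤ j → (j : ℝ≥0∞) * (EMetric.diam A) ^ α ≤ c → T^[j] x ∉ A}
      ≤ (EMetric.diam A) ^ α / c := by
  set D := (EMetric.diam A) ^ α with hDdef
  have hDT : D ≠ ∞ := ENNReal.rpow_ne_top_of_nonneg hα.le hD
  set Bad := {x | x ∈ A ∧ ∀ j : ℕ, 1 ≤ j → (j : ℝ≥0∞) * D ≤ c → T^[j] x ∉ A} with hBad
  have key : ∀ K : ℕ, (∀ j : ℕ, 1 ≤ j → j ≤ K → (j : ℝ≥0∞) * D ≤ c) →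
      μ Bad ≤ ((K : ℝ≥0∞) + 1)⁻¹ := by
    intro K hK
    have hsub : Bad ⊆ A ∩ ⋂ j ∈ Finset.Icc 1 K, (T^[j])⁻¹' Aᶜ := by
      intro x hx
      refine ⟨hx.1, ?_⟩
      simp only [Set.mem_iInter]
      intro j hj
      rw [Finset.mem_Icc] at hj
      exact hx.2 j hj.1 (hK j hj.1 hj.2)
    have := count_bound hT hA K
    have h2 : μ (A ∩ ⋂ j ∈ Finset.Icc 1 K, (T^[j])⁻¹' Aᶜ) ≤ ((K : ℝ≥0∞) + 1)⁻¹ := by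
      rw [ENNReal.le_inv_iff_mul_le, mul_comm]
      exact this
    exact le_trans (measure_mono hsub) h2
  rcases eq_or_ne D 0 with hD0 | hD0
  · have : μ Bad = 0 := by
      by_contra h
      obtain ⟨n, hn⟩ := ENNReal.exists_inv_nat_lt h
      have := key n (fun j _ _ => by rw [hD0, mul_zero]; exact zero_le)
      have h2 : ((n : ℝ≥0∞) + 1)⁻¹ ≤ ((n : ℝ≥0∞))⁻¹ :=
        ENNReal.inv_le_inv.2 (le_add_right le_rfl)
      exact absurd (le_trans this h2) (not_le.2 hn)
    rw [this]; exact zero_le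
  · have hcDT : c / D ≠ ∞ := by
      simp [ENNReal.div_eq_top, hc0, hcT, hD0]
    set K := ⌊(c / D).toReal⌋₊ with hKdef
    have hK1 : (K : ℝ≥0∞) ≤ c / D := by
      rw [← ENNReal.ofReal_toReal hcDT, ← ENNReal.ofReal_natCast]
      exact ENNReal.ofReal_le_ofReal (Nat.floor_le ENNReal.toReal_nonneg)
    have hK2 : c / D ≤ (K : ℝ≥0∞) + 1 := by
      rw [← ENNReal.ofReal_toReal hcDT]
      calc ENNReal.ofReal (c / D).toReal ≤ ENNReal.ofReal ((K : ℝ) + 1) :=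
            ENNReal.ofReal_le_ofReal (Nat.lt_floor_add_one _).le
      _ = (K : ℝ≥0∞) + 1 := by
            rw [ENNReal.ofReal_add (by positivity) zero_le_one]
            simp
    have hmain := key K (fun j h1 hj => by
      calc (j : ℝ≥0∞) * D ≤ (c / D) * D := by
            apply mul_le_mul_left
            exact le_trans (by exact_mod_cast Nat.cast_le.2 hj) hK1
      _ = c := ENNReal.div_mul_cancel hD0 hDT)
    refine le_trans hmain ?_
    rw [← ENNReal.inv_div (Or.inl hDT) (Or.inl hD0)]
    exact ENNReal.inv_le_inv.2 hK2

lemma EN_null {X : Type*} [MetricSpace X] [TopologicalSpace.SeparableSpace X]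
    [MeasurableSpace X] [BorelSpace X]
    {T : X → X} (hTm : Measurable T) {μ : Measure X} [IsProbabilityMeasure μ]
    (hT : MeasurePreserving T μ μ)
    {α : ℝ} (hα : 0 < α) {g : X → ENNReal}
    (hden : μH[α] = μ.withDensity g) (hbdd : essSup g μ ≠ ∞)
    {c : ℝ≥0∞} (hc : essSup g μ < c) (hcT : c ≠ ∞) (N : ℕ) (hN : 1 ≤ N) :
    μ {x | ∀ n : ℕ, N ≤ n → c < (n : ℝ≥0∞) * (edist (T^[n] x) x) ^ α} = 0 := by
  haveI : SecondCountableTopology X := UniformSpace.secondCountable_of_separable X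
  set s := essSup g μ with hs
  have hc0 : c ≠ 0 := (lt_of_le_of_lt zero_le hc).ne'
  set E := {x | ∀ n : ℕ, N ≤ n → c < (n : ℝ≥0∞) * (edist (T^[n] x) x) ^ α} with hE
  have hfm : ∀ n : ℕ, Measurable fun x => (n : ℝ≥0∞) * (edist (T^[n] x) x) ^ α :=
    fun n => (measurable_const.mul (((hTm.iterate n).edist measurable_id).pow_const α))
  have hEm : MeasurableSet E := by
    have : E = ⋂ n : ℕ, ⋂ (_ : N ≤ n),
        (fun x => (n : ℝ≥0∞) * (edist (T^[n] x) x) ^ α) ⁻¹' (Ioi c) := by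
      ext x; simp [hE]
    rw [this]
    exact MeasurableSet.iInter fun n => MeasurableSet.iInter fun _ =>
      (hfm n) measurableSet_Ioi
  -- Hausdorff bound
  have hHle : μH[α] E ≤ s * μ E := by
    rw [hden, withDensity_apply _ hEm]
    calc ∫⁻ x in E, g x ∂μ ≤ ∫⁻ _x in E, s ∂μ :=
          lintegral_mono_ae (ae_restrict_of_ae (ENNReal.ae_le_essSup g))
    _ = s * μ E := setLIntegral_const E s
  have hsmuT : s * μ E ≠ ∞ := ENNReal.mul_ne_top hbdd (measure_ne_top μ E)
  -- Short sets
  set Short : ℝ≥0∞ → Set X :=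
    fun r => {x | ∃ j : ℕ, 1 ≤ j ∧ j < N ∧ edist (T^[j] x) x ≤ r} with hShort
  have hShortm : ∀ r, MeasurableSet (Short r) := by
    intro r
    have : Short r = ⋃ j : ℕ, ⋃ (_ : 1 ≤ j ∧ j < N),
        (fun x => edist (T^[j] x) x) ⁻¹' (Iic r) := by
      ext x; simp [hShort]; tauto
    rw [this]
    exact MeasurableSet.iUnion fun j => MeasurableSet.iUnion fun _ =>
      ((hTm.iterate j).edist measurable_id) measurableSet_Iic
  -- key estimate
  have key : ∀ r : ℝ≥0∞, 0 < r → r ≠ ∞ → ∀ ε : ℝ≥0∞, 0 < ε →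
      μ E ≤ (s * μ E + ε) / c + μ (E ∩ Short r) := by
    intro r hr hrT ε hε
    -- extract a cover
    have h1 : (⨅ (t : ℕ → Set X) (_ : E ⊆ ⋃ n, t n) (_ : ∀ n, EMetric.diam (t n) ≤ r),
        ∑' n, ⨆ _ : (t n).Nonempty, EMetric.diam (t n) ^ α) ≤ μH[α] E := by
      rw [Measure.hausdorffMeasure_apply]
      exact le_iSup₂ (f := fun (r : ℝ≥0∞) (_ : 0 < r) =>
        ⨅ (t : ℕ → Set X) (_ : E ⊆ ⋃ n, t n) (_ : ∀ n, EMetric.diam (t n) ≤ r),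
          ∑' n, ⨆ _ : (t n).Nonempty, EMetric.diam (t n) ^ α) r hr
    have h2 : (⨅ (t : ℕ → Set X) (_ : E ⊆ ⋃ n, t n) (_ : ∀ n, EMetric.diam (t n) ≤ r),
        ∑' n, ⨆ _ : (t n).Nonempty, EMetric.diam (t n) ^ α) < s * μ E + ε :=
      lt_of_le_of_lt (h1.trans hHle) (ENNReal.lt_add_right hsmuT hε.ne')
    rw [iInf_lt_iff] at h2
    obtain ⟨t, h2⟩ := h2
    rw [iInf_lt_iff] at h2
    obtain ⟨hcov, h2⟩ := h2
    rw [iInf_lt_iff] at h2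
    obtain ⟨hdiam, h2⟩ := h2
    -- closed pieces
    set U : ℕ → Set X := fun n => closure (t n) with hU
    have hUm : ∀ n, MeasurableSet (U n) := fun n => isClosed_closure.measurableSet
    have hUd : ∀ n, EMetric.diam (U n) = EMetric.diam (t n) := fun n => EMetric.diam_closure _
    have hUcov : E ⊆ ⋃ n, U n :=
      hcov.trans (Set.iUnion_mono fun n => subset_closure)
    set Bad : ℕ → Set X := fun n => {x | x ∈ U n ∧ ∀ j : ℕ, 1 ≤ j →
        (j : ℝ≥0∞) * (EMetric.diam (U n)) ^ α ≤ c → T^[j] x ∉ U n} with hBadDef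
    have hBadle : ∀ n, μ (Bad n) ≤ (⨆ _ : (t n).Nonempty, EMetric.diam (t n) ^ α) / c := by
      intro n
      rcases (t n).eq_empty_or_nonempty with he | hne
      · have hUe : U n = ∅ := by rw [hU]; simp [he]
        have : Bad n = ∅ := by
          rw [hBadDef]; simp [hUe]
        simp [this, he]
      · rw [iSup_pos hne, ← hUd n]
        exact bad_bound hT (hUm n) hα hc0 hcT
          (by rw [hUd n]; exact (lt_of_le_of_lt (hdiam n) hrT.lt_top).ne)
    have hptwise : E ⊆ (⋃ n, Bad n) ∪ (E ∩ Short r) := by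
      intro x hxE
      obtain ⟨n, hn⟩ := Set.mem_iUnion.1 (hUcov hxE)
      by_cases hb : x ∈ Bad n
      · exact Or.inl (Set.mem_iUnion.2 ⟨n, hb⟩)
      · rw [hBadDef] at hb
        simp only [Set.mem_setOf_eq, not_and, not_forall] at hb
        obtain ⟨j, hj1, hjc, hjmem⟩ := hb hn
        rw [not_not] at hjmem
        have hed : edist (T^[j] x) x ≤ EMetric.diam (U n) :=
          EMetric.edist_le_diam_of_mem hjmem hn
        have hjlt : j < N := by
          by_contra hge
          push_neg at hge
          have h3 := hxE j hge
          have h4 : (j : ℝ≥0∞) * (edist (T^[j] x) x) ^ α ≤ c := by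
            refine le_trans ?_ hjc
            exact mul_le_mul_right (ENNReal.rpow_le_rpow hed hα.le) _
          exact absurd h3 (not_lt.2 h4)
        refine Or.inr ⟨hxE, ⟨j, hj1, hjlt, ?_⟩⟩
        exact hed.trans ((hUd n).le.trans (hdiam n))
    calc μ E ≤ μ ((⋃ n, Bad n) ∪ (E ∩ Short r)) := measure_mono hptwise
    _ ≤ μ (⋃ n, Bad n) + μ (E ∩ Short r) := measure_union_le _ _
    _ ≤ (s * μ E + ε) / c + μ (E ∩ Short r) := by
        gcongr
        calc μ (⋃ n, Bad n) ≤ ∑' n, μ (Bad n) := measure_iUnion_le _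
        _ ≤ ∑' n, (⨆ _ : (t n).Nonempty, EMetric.diam (t n) ^ α) / c :=
            ENNReal.tsum_le_tsum hBadle
        _ = (∑' n, ⨆ _ : (t n).Nonempty, EMetric.diam (t n) ^ α) / c := by
            simp only [div_eq_mul_inv]
            exact ENNReal.tsum_mul_right
        _ ≤ (s * μ E + ε) / c := ENNReal.div_le_div_right h2.le _
  -- shrink r
  have hshrink : ∀ ε : ℝ≥0∞, 0 < ε → μ E ≤ (s * μ E + ε) / c := by
    intro ε hε
    have hbound : ∀ m : ℕ, μ E ≤ (s * μ E + ε) / c + μ (E ∩ Short ((m : ℝ≥0∞) + 1)⁻¹) := by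
      intro m
      refine key _ (by simp [ENNReal.inv_pos]) (by simp) ε hε
    have hanti : Antitone fun m : ℕ => E ∩ Short ((m : ℝ≥0∞) + 1)⁻¹ := by
      intro a b hab
      refine Set.inter_subset_inter le_rfl ?_
      intro x ⟨j, h1, h2, h3⟩
      exact ⟨j, h1, h2, h3.trans (ENNReal.inv_le_inv.2 (add_le_add_left (Nat.cast_le.2 hab) 1))⟩
    have hiInter : (⋂ m : ℕ, E ∩ Short ((m : ℝ≥0∞) + 1)⁻¹) = ∅ := by
      ext x
      simp only [Set.mem_iInter, Set.mem_empty_iff_false, iff_false]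
      intro hx
      have hxE : x ∈ E := (hx 0).1
      by_cases hper : ∃ j : ℕ, 1 ≤ j ∧ j < N ∧ edist (T^[j] x) x = 0
      · obtain ⟨j, hj1, hjN, hj0⟩ := hper
        have hfixj : T^[j] x = x := edist_eq_zero.1 hj0
        have hfix : T^[j * N] x = x := by
          rw [Function.iterate_mul]
          exact Function.iterate_fixed hfixj N
        have h5 := hxE (j * N) (Nat.le_mul_of_pos_left N hj1)
        rw [hfix, edist_self, ENNReal.zero_rpow_of_pos hα, mul_zero] at h5
        exact absurd h5 (not_lt.2 zero_le)
      · push_neg at hper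
        have hF : (Finset.Ico 1 N).Nonempty := by
          rw [Finset.nonempty_Ico]
          -- need 1 < N or handle N = 1
          rcases Nat.lt_or_ge 1 N with h | h
          · exact h
          · exfalso
            obtain ⟨j, hj1, hjN, _⟩ := (hx 0).2
            omega
        set q := (Finset.Ico 1 N).inf' hF (fun j => edist (T^[j] x) x) with hq
        have hqpos : 0 < q := by
          rw [hq, Finset.lt_inf'_iff]
          intro j hj
          rw [Finset.mem_Ico] at hj
          exact pos_iff_ne_zero.2 (hper j hj.1 hj.2)
        obtain ⟨m, hm⟩ := ENNReal.exists_inv_nat_lt hqpos.ne'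
        obtain ⟨j, hj1, hjN, hle⟩ := (hx m).2
        have : q ≤ edist (T^[j] x) x :=
          Finset.inf'_le _ (Finset.mem_Ico.2 ⟨hj1, hjN⟩)
        have hcontr : edist (T^[j] x) x < q := by
          refine lt_of_le_of_lt (hle.trans ?_) hm
          gcongr
          exact le_add_right le_rfl
        exact absurd this (not_le.2 hcontr)
    have htend : Tendsto (fun m : ℕ => μ (E ∩ Short ((m : ℝ≥0∞) + 1)⁻¹)) atTop (𝓝 0) := by
      have := tendsto_measure_iInter_atTop (μ := μ)
        (fun m => (hEm.inter (hShortm _)).nullMeasurableSet) hanti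
        ⟨0, measure_ne_top μ _⟩
      rw [hiInter] at this
      simpa [Function.comp_def] using this
    have : Tendsto (fun m : ℕ => (s * μ E + ε) / c + μ (E ∩ Short ((m : ℝ≥0∞) + 1)⁻¹))
        atTop (𝓝 ((s * μ E + ε) / c)) := by
      simpa using htend.const_add ((s * μ E + ε) / c)
    exact ge_of_tendsto' this hbound
  have hfinal : μ E ≤ s * μ E / c := by
    have ht1 : Tendsto (fun k : ℕ => ((k : ℝ≥0∞) + 1)⁻¹) atTop (𝓝 0) := by
      have h := ENNReal.tendsto_inv_nat_nhds_zero.comp (tendsto_add_atTop_nat 1)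
      have heq : (fun k : ℕ => ((k : ℝ≥0∞) + 1)⁻¹)
          = (fun n : ℕ => (n : ℝ≥0∞)⁻¹) ∘ (fun n => n + 1) := by
        funext k
        simp only [Function.comp]
        push_cast
        ring_nf
      rw [heq]
      exact h
    have ht2 : Tendsto (fun k : ℕ => (s * μ E + ((k : ℝ≥0∞) + 1)⁻¹) / c) atTop
        (𝓝 (s * μ E / c)) := by
      have := ENNReal.Tendsto.div_const (ht1.const_add (s * μ E)) (Or.inr hc0)
      simpa using this
    exact ge_of_tendsto' ht2 (fun k => hshrink _ (by simp [ENNReal.inv_pos]))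
  rcases eq_or_ne (μ E) 0 with h | h
  · exact h
  · exfalso
    have h1 : s * μ E < μ E * c := by
      calc s * μ E < c * μ E := by rw [mul_comm s, mul_comm c]; exact ENNReal.mul_lt_mul_right h (measure_ne_top μ E) hc
      _ = μ E * c := mul_comm _ _
    have h2 : s * μ E / c < μ E := (ENNReal.div_lt_iff (Or.inl hc0) (Or.inl hcT)).2 h1
    exact absurd hfinal (not_le.2 h2)

theorem stmt_2 {X : Type*} [MetricSpace X] [TopologicalSpace.SeparableSpace X]
    [MeasurableSpace X] [BorelSpace X]
    (T : X → X) (hTm : Measurable T) (μ : Measure X) [IsProbabilityMeasure μ]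
    (hT : MeasurePreserving T μ μ) (hErg : Ergodic T μ)
    (α : ℝ) (hα : 0 < α) (g : X → ENNReal) (hg : Measurable g)
    (hden : μH[α] = μ.withDensity g) (habs : μ ≪ μH[α])
    (hbdd : essSup g μ < ⊤) :
    ∀ᵐ x ∂μ, liminf
        (fun n : ℕ => ENNReal.ofReal ((n : ℝ) ^ (1 / α)) * edist (T^[n] x) x) atTop
      ≤ (essSup g μ) ^ (1 / α) := by
  set s := essSup g μ with hs
  have hsT : s ≠ ∞ := hbdd.ne
  set c : ℕ → ℝ≥0∞ := fun k => s + ((k : ℝ≥0∞) + 1)⁻¹ with hc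
  have hck : ∀ k, s < c k := fun k =>
    ENNReal.lt_add_right hsT (by simp)
  have hckT : ∀ k, c k ≠ ∞ := fun k => by
    rw [hc]
    exact ENNReal.add_ne_top.2 ⟨hsT, by simp⟩
  set F : X → ℝ≥0∞ := fun x =>
    liminf (fun n : ℕ => ENNReal.ofReal ((n : ℝ) ^ (1 / α)) * edist (T^[n] x) x) atTop with hF
  -- key computation : the α-th power of the liminf terms
  have hterm : ∀ (x : X) (n : ℕ),
      (ENNReal.ofReal ((n : ℝ) ^ (1 / α)) * edist (T^[n] x) x) ^ α
        = (n : ℝ≥0∞) * (edist (T^[n] x) x) ^ α := by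
    intro x n
    rw [ENNReal.mul_rpow_of_nonneg _ _ hα.le,
      ENNReal.ofReal_rpow_of_nonneg (Real.rpow_nonneg (Nat.cast_nonneg n) _) hα.le,
      ← Real.rpow_mul (Nat.cast_nonneg n), one_div_mul_cancel hα.ne', Real.rpow_one,
      ENNReal.ofReal_natCast]
  have hper : ∀ k : ℕ, ∀ᵐ x ∂μ, F x ≤ (c k) ^ (1 / α) := by
    intro k
    rw [ae_iff]
    refine measure_mono_null (t := ⋃ N : ℕ,
      {x | ∀ n : ℕ, (N + 1) ≤ n → c k < (n : ℝ≥0∞) * (edist (T^[n] x) x) ^ α}) ?_ ?_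
    · intro x hx
      simp only [mem_setOf_eq, not_le] at hx
      have hev : ∀ᶠ (n : ℕ) in atTop,
          (c k) ^ (1 / α) < ENNReal.ofReal ((n : ℝ) ^ (1 / α)) * edist (T^[n] x) x :=
        eventually_lt_of_lt_liminf hx
      obtain ⟨N, hN⟩ := eventually_atTop.1 hev
      refine Set.mem_iUnion.2 ⟨N, fun n hn => ?_⟩
      have h1 := hN n (by omega)
      have h2 := ENNReal.rpow_lt_rpow h1 hα
      rwa [hterm, ← ENNReal.rpow_mul, one_div_mul_cancel hα.ne', ENNReal.rpow_one] at h2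
    · exact measure_iUnion_null fun N =>
        EN_null hTm hT hα hden hsT (hck k) (hckT k) (N + 1) (by omega)
  rw [← ae_all_iff] at hper
  filter_upwards [hper] with x hx
  -- from F x ≤ (c k)^(1/α) for all k conclude F x ≤ s^(1/α)
  have hpow : (F x) ^ α ≤ s := by
    refine ENNReal.le_of_forall_pos_le_add fun ε hε hslt => ?_
    obtain ⟨m, hm⟩ := ENNReal.exists_inv_nat_lt (a := (ε : ℝ≥0∞)) (by exact_mod_cast hε.ne')
    have h1 : (F x) ^ α ≤ c m := by
      have := ENNReal.rpow_le_rpow (hx m) hα.le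
      rwa [← ENNReal.rpow_mul, one_div_mul_cancel hα.ne', ENNReal.rpow_one] at this
    refine h1.trans ?_
    show s + ((m : ℝ≥0∞) + 1)⁻¹ ≤ s + ε
    exact add_le_add_right (le_trans (ENNReal.inv_le_inv.2 (le_add_right le_rfl)) hm.le) s
  calc F x = ((F x) ^ α) ^ (1 / α) := by
        rw [← ENNReal.rpow_mul, mul_one_div_cancel hα.ne', ENNReal.rpow_one]
  _ ≤ s ^ (1 / α) := ENNReal.rpow_le_rpow hpow (by positivity)
end

section
/- For μ-almost every x, liminf_{n→∞} n^{1/α} d(T^n(x), x) ≤ g(x)^{1/α}, where g(x) = lim_{r→0} ess sup of (dH_α/dμ) restricted to B(x, r). -/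
/-!
Suppose every return of a point of `A` to within `ε` of itself after `n ≥ 1` steps satisfies
`c < n^{1/α} d(Tⁿx, x)`. If `s` has diameter at most `ε` and `D = s̄ ∩ A` has measure `p > 0`,
the pigeonhole principle (Poincaré recurrence) yields a return from `D` to `D` after some
`n ≤ 1/p` steps, so `c^α p ≤ n diam(s)^α p ≤ diam(s)^α`; hence `c^α μ|_A ≤ H_α`.
If moreover `g < c^α` a.e. on `A`, then `c^α μ(A) ≤ H_α(A) = ∫_A g < c^α μ(A)` forces `μ(A) = 0`.
A point violating the theorem lies in such a set for some rational `c` and some `ε = 1/m`: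
its returns are slow at small scales because it is not periodic, and it has a neighbourhood on
which `g < c^α` a.e. Countably many null sets cover all such points.
-/

open MeasureTheory Filter Set Metric
open scoped ENNReal NNReal

lemma ENNReal.exists_nat_mul_le_one_lt_succ_mul {p : ℝ≥0∞} (h0 : p ≠ 0) (htop : p ≠ ∞) :
    ∃ k : ℕ, k * p ≤ 1 ∧ 1 < (k + 1) * p := by
  lift p to ℝ≥0 using htop
  have hp : 0 < p := pos_iff_ne_zero.mpr (by exact_mod_cast h0)
  refine ⟨⌊1 / p⌋₊, ?_, ?_⟩
  · exact_mod_cast (le_div_iff₀ hp).mp (Nat.floor_le (by positivity))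
  · exact_mod_cast (div_lt_iff₀ hp).mp (Nat.lt_floor_add_one (1 / p))

lemma ENNReal.ofReal_natCast_rpow_one_div_rpow (n : ℕ) {α : ℝ} (hα : 0 < α) :
    ENNReal.ofReal ((n : ℝ) ^ (1 / α)) ^ α = n := by
  rw [ENNReal.ofReal_rpow_of_nonneg (by positivity) hα.le, ← Real.rpow_mul n.cast_nonneg,
    one_div_mul_cancel hα.ne', Real.rpow_one, ENNReal.ofReal_natCast]

section

variable {X : Type*}

def slowReturnSet [PseudoEMetricSpace X] (T : X → X) (α : ℝ) (c ε : ℝ≥0∞) : Set X :=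
  {x | ∀ n : ℕ, 1 ≤ n → edist (T^[n] x) x ≤ ε →
    c < ENNReal.ofReal ((n : ℝ) ^ (1 / α)) * edist (T^[n] x) x}

lemma measurableSet_slowReturnSet [PseudoEMetricSpace X] [MeasurableSpace X]
    [OpensMeasurableSpace X] [SecondCountableTopology X] {T : X → X} (hT : Measurable T)
    (α : ℝ) (c ε : ℝ≥0∞) : MeasurableSet (slowReturnSet T α c ε) := by
  have hdist (n : ℕ) : Measurable fun x => edist (T^[n] x) x := (hT.iterate n).edist measurable_id
  exact Measurable.setOf <| Measurable.forall fun n => measurable_const.imp <|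
    (measurableSet_le (hdist n) measurable_const).mem.imp
      (measurableSet_lt measurable_const ((hdist n).const_mul _)).mem

lemma exists_mem_slowReturnSet_of_lt_liminf [EMetricSpace X] {T : X → X} {α : ℝ} {c : ℝ≥0∞}
    {x : X}
    (h : c < liminf (fun n : ℕ => ENNReal.ofReal ((n : ℝ) ^ (1 / α)) * edist (T^[n] x) x) atTop) :
    ∃ m : ℕ, x ∈ slowReturnSet T α c (m : ℝ≥0∞)⁻¹ := by
  obtain ⟨N, hN⟩ := eventually_atTop.mp (eventually_lt_of_lt_liminf h)
  have hpos : ∀ n ∈ Finset.Ico 1 N, 0 < edist (T^[n] x) x := by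
    intro n hn
    refine pos_iff_ne_zero.mpr fun h0 => ?_
    have hper : Function.IsPeriodicPt T (n * N) x :=
      Function.IsPeriodicPt.mul_const (edist_eq_zero.mp h0) N
    have := hN (n * N) (Nat.le_mul_of_pos_left N (Finset.mem_Ico.mp hn).1)
    rw [hper.eq, edist_self, mul_zero] at this
    exact not_lt_zero this
  obtain ⟨m, hm⟩ : ∃ m : ℕ, ∀ n ∈ Finset.Ico 1 N, (m : ℝ≥0∞)⁻¹ < edist (T^[n] x) x :=
    ((eventually_all_finset _).mpr fun n hn =>
      ENNReal.tendsto_inv_nat_nhds_zero.eventually (gt_mem_nhds (hpos n hn))).exists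
  refine ⟨m, fun n hn hnm => ?_⟩
  rcases lt_or_ge n N with hnN | hNn
  · exact absurd hnm (hm n (Finset.mem_Ico.mpr ⟨hn, hnN⟩)).not_ge
  · exact hN n hNn

theorem smul_restrict_le_hausdorffMeasure_of_slow_return [EMetricSpace X] [MeasurableSpace X]
    [BorelSpace X] {T : X → X} {μ : Measure X} [IsProbabilityMeasure μ]
    (hT : MeasurePreserving T μ μ) {α : ℝ} (hα : 0 < α) {c ε : ℝ≥0∞}
    (hε : 0 < ε) {A : Set X} (hA : MeasurableSet A)
    (hret : ∀ x ∈ A, ∀ n : ℕ, 1 ≤ n → T^[n] x ∈ A → edist (T^[n] x) x ≤ ε →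
      c < ENNReal.ofReal ((n : ℝ) ^ (1 / α)) * edist (T^[n] x) x) :
    c ^ α • μ.restrict A ≤ μH[α] := by
  refine Measure.le_hausdorffMeasure _ _ ε hε fun s hs => ?_
  rw [Measure.smul_apply, smul_eq_mul, Measure.restrict_apply' hA]
  set D := closure s ∩ A
  suffices c ^ α * μ D ≤ ediam s ^ α from
    le_trans (by gcongr; exact inter_subset_inter_left A subset_closure) this
  rcases eq_or_ne (μ D) 0 with hD | hD
  · simp [hD]
  obtain ⟨k, hk, hk1⟩ := ENNReal.exists_nat_mul_le_one_lt_succ_mul hD (measure_ne_top μ D)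
  obtain ⟨x, hx, n, ⟨hn0, hnk⟩, hnx⟩ :=
    hT.exists_mem_iterate_mem_of_measure_univ_lt_mul_measure
      (isClosed_closure.measurableSet.inter hA).nullMeasurableSet
      (n := k + 1) (by simpa using hk1)
  have hdist : edist (T^[n] x) x ≤ ediam s :=
    ediam_closure s ▸ edist_le_ediam_of_mem hnx.1 hx.1
  have hc : c < ENNReal.ofReal ((n : ℝ) ^ (1 / α)) * ediam s :=
    (hret x hx.2 n hn0 hnx.2 (hdist.trans hs)).trans_le (by gcongr)
  have hcα : c ^ α ≤ n * ediam s ^ α := by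
    rw [← ENNReal.ofReal_natCast_rpow_one_div_rpow n hα, ← ENNReal.mul_rpow_of_nonneg _ _ hα.le]
    exact ENNReal.rpow_le_rpow hc.le hα.le
  calc c ^ α * μ D ≤ n * ediam s ^ α * μ D := by gcongr
    _ ≤ ediam s ^ α * (k * μ D) := by
        rw [mul_comm (n : ℝ≥0∞), mul_assoc]
        gcongr
        exact_mod_cast Nat.lt_succ_iff.mp hnk
    _ ≤ ediam s ^ α := by simpa using mul_le_mul_right hk _

theorem measure_eq_zero_of_slow_return_of_ae_lt [EMetricSpace X] [MeasurableSpace X]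
    [BorelSpace X] {T : X → X} {μ : Measure X} [IsProbabilityMeasure μ]
    (hT : MeasurePreserving T μ μ) {α : ℝ} (hα : 0 < α) {g : X → ℝ≥0∞}
    (hden : μH[α] = μ.withDensity g) {c ε : ℝ≥0∞} (hc : c ≠ ∞) (hε : 0 < ε) {A : Set X}
    (hA : MeasurableSet A)
    (hret : ∀ x ∈ A, ∀ n : ℕ, 1 ≤ n → T^[n] x ∈ A → edist (T^[n] x) x ≤ ε →
      c < ENNReal.ofReal ((n : ℝ) ^ (1 / α)) * edist (T^[n] x) x)
    (hg : ∀ᵐ x ∂μ, x ∈ A → g x < c ^ α) :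
    μ A = 0 := by
  by_contra hA0
  have hlower : c ^ α * μ A ≤ ∫⁻ x in A, g x ∂μ := by
    simpa [hden, withDensity_apply g hA, Measure.restrict_apply_self] using
      smul_restrict_le_hausdorffMeasure_of_slow_return hT hα hε hA hret A
  have hbound : ∫⁻ x in A, g x ∂μ ≤ c ^ α * μ A := by
    simpa [mul_comm] using setLIntegral_mono_ae' hA (hg.mono fun x h hx => (h hx).le)
  have hupper : ∫⁻ x in A, g x ∂μ < c ^ α * μ A := by
    simpa [mul_comm] using setLIntegral_strict_mono hA hA0 measurable_const
      (ne_top_of_le_ne_top (by finiteness) hbound) hg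
  exact (hlower.trans_lt hupper).false

lemma isOpen_setOf_iInf_essSup_ball_lt [PseudoMetricSpace X] [MeasurableSpace X]
    (μ : Measure X) (g : X → ℝ≥0∞) (b : ℝ≥0∞) :
    IsOpen {x | ⨅ (r : ℝ) (_ : 0 < r), essSup g (μ.restrict (ball x r)) < b} := by
  refine Metric.isOpen_iff.mpr fun x hx => ?_
  simp only [mem_ofPred_eq, iInf_lt_iff] at hx ⊢
  obtain ⟨r, hr0, hrb⟩ := hx
  refine ⟨r / 2, half_pos hr0, fun y hy => ⟨r / 2, half_pos hr0, ?_⟩⟩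
  refine lt_of_le_of_lt (essSup_mono_measure' (Measure.restrict_mono ?_ le_rfl)) hrb
  intro z hz
  have := dist_triangle z y x
  rw [mem_ball] at hy hz ⊢
  linarith

lemma ae_lt_of_iInf_essSup_ball_lt [PseudoMetricSpace X] [SecondCountableTopology X]
    [MeasurableSpace X] [OpensMeasurableSpace X] (μ : Measure X) (g : X → ℝ≥0∞) (b : ℝ≥0∞) :
    ∀ᵐ x ∂μ, ⨅ (r : ℝ) (_ : 0 < r), essSup g (μ.restrict (ball x r)) < b → g x < b := by
  set U := {x | ⨅ (r : ℝ) (_ : 0 < r), essSup g (μ.restrict (ball x r)) < b}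
  have hr : ∀ x ∈ U, ∃ r > 0, essSup g (μ.restrict (ball x r)) < b := by
    simpa only [U, mem_ofPred_eq, iInf_lt_iff, exists_prop] using fun x hx => hx
  choose! r hr0 hrb using hr
  obtain ⟨S, hSU, hS, hSball⟩ := TopologicalSpace.isOpen_biUnion_countable U
    (fun x => ball x (r x)) fun x _ => isOpen_ball
  have hcover : U ⊆ ⋃ x ∈ S, ball x (r x) :=
    hSball ▸ fun x hx => mem_biUnion hx (mem_ball_self (hr0 x hx))
  have hU : ∀ᵐ x ∂μ.restrict U, g x < b :=
    ae_restrict_of_ae_restrict_of_subset hcover <| (ae_restrict_biUnion_iff _ hS _).mpr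
      fun x hx => ae_lt_of_essSup_lt (hrb x (hSU hx))
  exact (ae_restrict_iff' (isOpen_setOf_iInf_essSup_ball_lt μ g b).measurableSet).mp hU

end

theorem stmt_3_general {X : Type*} [MetricSpace X] [TopologicalSpace.SeparableSpace X]
    [MeasurableSpace X] [BorelSpace X]
    (T : X → X) (μ : Measure X) [IsProbabilityMeasure μ]
    (hT : MeasurePreserving T μ μ)
    (α : ℝ) (hα : 0 < α) (g : X → ENNReal)
    (hden : μH[α] = μ.withDensity g) :
    ∀ᵐ x ∂μ, liminf
        (fun n : ℕ => ENNReal.ofReal ((n : ℝ) ^ (1 / α)) * edist (T^[n] x) x) atTop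
      ≤ (⨅ (r : ℝ) (_ : 0 < r), essSup g (μ.restrict (Metric.ball x r))) ^ (1 / α) := by
  set c : ℚ → ℝ≥0∞ := fun q => (q : ℝ).toNNReal
  set U : ℚ → Set X :=
    fun q => {x | ⨅ (r : ℝ) (_ : 0 < r), essSup g (μ.restrict (ball x r)) < c q ^ α}
  have hnull (q : ℚ) (m : ℕ) : ∀ᵐ x ∂μ, x ∉ slowReturnSet T α (c q) (m : ℝ≥0∞)⁻¹ ∩ U q :=
    measure_eq_zero_iff_ae_notMem.mp <| measure_eq_zero_of_slow_return_of_ae_lt hT hα hden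
      ENNReal.coe_ne_top (by simp)
      ((measurableSet_slowReturnSet hT.measurable _ _ _).inter
        (isOpen_setOf_iInf_essSup_ball_lt μ g _).measurableSet)
      (fun x hx n hn _ hnm => hx.1 n hn hnm)
      ((ae_lt_of_iInf_essSup_ball_lt μ g _).mono fun x h hx => h hx.2)
  filter_upwards [ae_all_iff.mpr fun q => ae_all_iff.mpr (hnull q)] with x hx
  by_contra hlt
  obtain ⟨q, -, hlow, hhigh⟩ := ENNReal.lt_iff_exists_rat_btwn.mp (not_le.mp hlt)
  obtain ⟨m, hm⟩ := exists_mem_slowReturnSet_of_lt_liminf hhigh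
  rw [one_div, ENNReal.rpow_inv_lt_iff hα] at hlow
  exact hx q m ⟨hm, hlow⟩

theorem stmt_3 {X : Type*} [MetricSpace X] [TopologicalSpace.SeparableSpace X]
    [MeasurableSpace X] [BorelSpace X]
    (T : X → X) (hTm : Measurable T) (μ : Measure X) [IsProbabilityMeasure μ]
    (hT : MeasurePreserving T μ μ) (hErg : Ergodic T μ)
    (α : ℝ) (hα : 0 < α) (g : X → ENNReal) (hg : Measurable g)
    (hden : μH[α] = μ.withDensity g) (habs : μ ≪ μH[α]) :
    ∀ᵐ x ∂μ, liminf
        (fun n : ℕ => ENNReal.ofReal ((n : ℝ) ^ (1 / α)) * edist (T^[n] x) x) atTop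
      ≤ (⨅ (r : ℝ) (_ : 0 < r), essSup g (μ.restrict (Metric.ball x r))) ^ (1 / α) :=
  stmt_3_general T μ hT α hα g hden
end

section
/- For the adding machine T on the Cantor set and the point z = 0 (code 000...), for every n ≥ 0 one has |T^{2^n}(z) - z| = 2/3^{n+1}, and |T^k(z) - z| > 2/3^{n+1} for all k with 2^n < k < 2^{n+1}. -/
/-!
Reading a code `x` as the binary digits of a (possibly infinite) integer `Σ x_k 2^k`, the adding
machine is `x ↦ x + 1` with carries, so `T^k(000…)` is the binary expansion of `k`.
Hence `T^{2^n}(z)` has the single digit `n`, at distance `2 / 3^{n+1}` from `z = 0`, while every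
`k` with `2^n < k < 2^{n+1}` has digit `n` and at least one further nonzero digit.
-/

open MeasureTheory Filter
open scoped Classical

/-- The point of the middle-third Cantor set with ternary code `x`
(digit `true` ↦ 2, `false` ↦ 0): `x = Σ_{k≥1} 2 x_k / 3^k`. -/
noncomputable def cantorVal (x : ℕ → Bool) : ℝ :=
  ∑' k : ℕ, (if x k then 2 else 0) / 3 ^ (k + 1)

/-- The adding machine on codes: set the first digit equal to `false` (i.e. 0) to
`true` (i.e. 1) and all earlier digits to `false`; `111... ↦ 000...`. -/
noncomputable def addingMachine (x : ℕ → Bool) : ℕ → Bool :=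
  if h : ∃ n, x n = false then
    fun k => if k < Nat.find h then false else if k = Nat.find h then true else x k
  else fun _ => false

namespace Nat

theorem testBit_add_one_of_testBit_eq_false {k j : ℕ} (hj : k.testBit j = false)
    (hlow : ∀ i < j, k.testBit i = true) (i : ℕ) :
    (k + 1).testBit i = if i < j then false else if i = j then true else k.testBit i := by
  have hmod : k % 2 ^ (j + 1) = 2 ^ j - 1 := by
    apply Nat.eq_of_testBit_eq
    intro i
    rw [testBit_mod_two_pow, testBit_two_pow_sub_one]
    rcases lt_trichotomy i j with h | rfl | h
    · simp [h, Nat.lt_succ_of_lt h, hlow i h]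
    · simp [hj]
    · simp [show ¬i < j + 1 by omega, show ¬i < j by omega]
  have hsucc : k + 1 = 2 ^ (j + 1) * (k / 2 ^ (j + 1)) + 2 ^ j := by
    have := Nat.div_add_mod k (2 ^ (j + 1))
    have := Nat.one_le_two_pow (n := j)
    omega
  rw [hsucc, testBit_two_pow_mul_add _ (Nat.pow_lt_pow_succ one_lt_two), testBit_two_pow,
    testBit_div_two_pow]
  rcases lt_trichotomy i j with h | rfl | h
  · simp [h, Nat.lt_succ_of_lt h, h.ne']
  · simp
  · simp [show ¬i < j + 1 by omega, show ¬i < j by omega, h.ne', Nat.sub_add_cancel h]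

theorem testBit_of_two_pow_le_of_lt_two_pow {k n : ℕ} (hlo : 2 ^ n ≤ k) (hhi : k < 2 ^ (n + 1)) :
    k.testBit n = true := by
  obtain ⟨r, rfl⟩ := exists_add_of_le hlo
  rw [testBit_two_pow_add_eq, testBit_lt_two_pow (by rw [pow_succ] at hhi; omega)]
  rfl

end Nat

theorem addingMachine_eq_of_first_false {x : ℕ → Bool} {j : ℕ} (hj : x j = false)
    (hlow : ∀ i < j, x i = true) :
    addingMachine x = fun i => if i < j then false else if i = j then true else x i := by
  have h : ∃ n, x n = false := ⟨j, hj⟩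
  have hfind : Nat.find h = j := (Nat.find_eq_iff h).2 ⟨hj, fun i hi => by simp [hlow i hi]⟩
  simp [addingMachine, h, hfind]

theorem addingMachine_testBit (k : ℕ) :
    addingMachine (fun i => k.testBit i) = fun i => (k + 1).testBit i := by
  have h : ∃ j, k.testBit j = false := ⟨k, Nat.testBit_lt_two_pow Nat.lt_two_pow_self⟩
  have hlow : ∀ i < Nat.find h, k.testBit i = true := fun i hi => by
    simpa using Nat.find_min h hi
  rw [addingMachine_eq_of_first_false (Nat.find_spec h) hlow]
  funext i
  rw [Nat.testBit_add_one_of_testBit_eq_false (Nat.find_spec h) hlow]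

theorem iterate_addingMachine_false (k : ℕ) :
    addingMachine^[k] (fun _ => false) = fun i => k.testBit i := by
  induction k with
  | zero => simp
  | succ k ih => rw [Function.iterate_succ_apply', ih, addingMachine_testBit]

theorem summable_cantorVal (x : ℕ → Bool) :
    Summable fun k : ℕ => (if x k then (2 : ℝ) else 0) / 3 ^ (k + 1) := by
  refine Summable.of_nonneg_of_le (fun k => by positivity) (fun k => ?_)
    ((summable_geometric_of_lt_one (by norm_num) (by norm_num : (1 / 3 : ℝ) < 1)).mul_left 2)
  calc (if x k then (2 : ℝ) else 0) / 3 ^ (k + 1) ≤ 2 / 3 ^ k :=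
        div_le_div₀ (by norm_num) (by split <;> norm_num) (by positivity)
          (pow_le_pow_right₀ (by norm_num) k.le_succ)
    _ = 2 * (1 / 3) ^ k := by rw [div_pow, one_pow, mul_one_div]

theorem cantorVal_nonneg (x : ℕ → Bool) : 0 ≤ cantorVal x :=
  tsum_nonneg fun _ => by positivity

theorem cantorVal_false : cantorVal (fun _ => false) = 0 := by
  simp [cantorVal]

theorem cantorVal_testBit_two_pow (n : ℕ) :
    cantorVal (fun i => (2 ^ n).testBit i) = 2 / 3 ^ (n + 1) := by
  rw [cantorVal, tsum_eq_single n fun i hi => by simp [Ne.symm hi]]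
  simp

theorem sum_le_cantorVal (x : ℕ → Bool) (s : Finset ℕ) (hs : ∀ j ∈ s, x j = true) :
    ∑ j ∈ s, (2 : ℝ) / 3 ^ (j + 1) ≤ cantorVal x :=
  calc ∑ j ∈ s, (2 : ℝ) / 3 ^ (j + 1)
      = ∑ j ∈ s, (if x j then (2 : ℝ) else 0) / 3 ^ (j + 1) :=
        Finset.sum_congr rfl fun j hj => by simp [hs j hj]
    _ ≤ cantorVal x := (summable_cantorVal x).sum_le_tsum s fun _ _ => by positivity

theorem stmt_8 (z : ℕ → Bool) (hz : z = fun _ => false) : ∀ n : ℕ,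
    |cantorVal (addingMachine^[2 ^ n] z) - cantorVal z| = 2 / 3 ^ (n + 1) ∧
    ∀ k : ℕ, 2 ^ n < k → k < 2 ^ (n + 1) →
      |cantorVal (addingMachine^[k] z) - cantorVal z| > 2 / 3 ^ (n + 1) := by
  subst hz
  intro n
  simp only [iterate_addingMachine_false, cantorVal_false, sub_zero,
    abs_of_nonneg (cantorVal_nonneg _)]
  refine ⟨cantorVal_testBit_two_pow n, fun k hlo hhi => ?_⟩
  have hkn := Nat.testBit_of_two_pow_le_of_lt_two_pow hlo.le hhi
  obtain ⟨i, hi⟩ := Nat.exists_testBit_ne_of_ne hlo.ne'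
  have hin : i ≠ n := by
    rintro rfl
    simp [hkn] at hi
  have hki : k.testBit i = true := by
    simpa [Nat.testBit_two_pow, Ne.symm hin] using hi
  have hsum := sum_le_cantorVal (fun i => k.testBit i) {i, n} (by simp [hki, hkn])
  rw [Finset.sum_pair hin] at hsum
  have : (0 : ℝ) < 2 / 3 ^ (i + 1) := by positivity
  linarith
end

section
/- For the adding machine T on the Cantor set, for every point x and every n ≥ 0: |T^{2^n}(x) - x| = 2/3^{n+1} if x_{n+1} = 0; |T^{2^n}(x) - x| = 4/3^{n+2} if x_{n+1} = 1 and x_{n+2} = 0; and |T^{2^n}(x) - x| > 2/3^{n+1} if x_{n+1} = x_{n+2} = 1. -/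
open MeasureTheory Filter
open scoped Classical

namespace AMaux

/-- Cons a digit on front of a code. -/
def cns (b : Bool) (y : ℕ → Bool) : ℕ → Bool
  | 0 => b
  | k + 1 => y k

/-- Tail of a code. -/
def tl (x : ℕ → Bool) : ℕ → Bool := fun k => x (k + 1)

lemma cns_tl (x : ℕ → Bool) : cns (x 0) (tl x) = x := by
  funext k; cases k <;> rfl

lemma summable_cv (x : ℕ → Bool) :
    Summable (fun k : ℕ => (if x k then (2:ℝ) else 0) / 3 ^ (k + 1)) := by
  apply Summable.of_nonneg_of_le (f := fun k : ℕ => (2/3 : ℝ) * (1/3) ^ k)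
  · intro k; positivity
  · intro k
    have h : (2/3 : ℝ) * (1/3) ^ k = 2 / 3 ^ (k + 1) := by
      rw [pow_succ]
      field_simp
      rw [← mul_pow]; norm_num
    rw [h]
    gcongr
    split <;> norm_num
  · exact (summable_geometric_of_lt_one (by norm_num) (by norm_num)).mul_left _

lemma cv_nonneg (x : ℕ → Bool) : 0 ≤ cantorVal x := by
  apply tsum_nonneg
  intro k
  positivity

lemma cv_le_one (x : ℕ → Bool) : cantorVal x ≤ 1 := by
  have h2 : Summable (fun k : ℕ => (2/3 : ℝ) * (1/3) ^ k) :=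
    (summable_geometric_of_lt_one (by norm_num) (by norm_num)).mul_left _
  have hle : cantorVal x ≤ ∑' k : ℕ, (2/3 : ℝ) * (1/3) ^ k := by
    apply Summable.tsum_le_tsum _ (summable_cv x) h2
    intro k
    have h : (2/3 : ℝ) * (1/3) ^ k = 2 / 3 ^ (k + 1) := by
      rw [pow_succ]; field_simp; rw [← mul_pow]; norm_num
    rw [h]
    gcongr
    split <;> norm_num
  have hval : ∑' k : ℕ, (2/3 : ℝ) * (1/3) ^ k = 1 := by
    rw [tsum_mul_left, tsum_geometric_of_lt_one (by norm_num) (by norm_num)]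
    norm_num
  linarith

lemma cv_split (x : ℕ → Bool) :
    cantorVal x = (if x 0 then 2 else 0) / 3 + cantorVal (tl x) / 3 := by
  unfold cantorVal
  rw [Summable.tsum_eq_zero_add (summable_cv x)]
  have h : ∀ k : ℕ, (if x (k + 1) then (2:ℝ) else 0) / 3 ^ (k + 1 + 1)
      = ((if tl x k then (2:ℝ) else 0) / 3 ^ (k + 1)) / 3 := by
    intro k
    rw [pow_succ]
    simp only [tl]
    ring
  rw [tsum_congr h, tsum_div_const]
  norm_num

lemma cv_cns (b : Bool) (y : ℕ → Bool) :
    cantorVal (cns b y) = (if b then 2 else 0) / 3 + cantorVal y / 3 := by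
  rw [cv_split (cns b y)]
  rfl

lemma am_eq_false (x : ℕ → Bool) (h0 : x 0 = false) :
    addingMachine x = cns true (tl x) := by
  have h : ∃ n, x n = false := ⟨0, h0⟩
  have hf : Nat.find h = 0 := (Nat.find_eq_zero h).mpr h0
  funext k
  simp only [addingMachine, dif_pos h, hf]
  cases k with
  | zero => simp [cns]
  | succ k => simp [cns, tl]

lemma am_eq_true (x : ℕ → Bool) (h0 : x 0 = true) :
    addingMachine x = cns false (addingMachine (tl x)) := by
  by_cases h : ∃ n, x n = false
  · have h' : ∃ n, tl x n = false := by
      obtain ⟨n, hn⟩ := h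
      cases n with
      | zero => rw [h0] at hn; exact absurd hn (by simp)
      | succ m => exact ⟨m, hn⟩
    have hm : Nat.find h ≠ 0 := by
      intro hc
      have := (Nat.find_eq_zero h).mp hc
      rw [h0] at this; exact absurd this (by simp)
    obtain ⟨m, hmeq⟩ : ∃ m, Nat.find h = m + 1 := ⟨Nat.find h - 1, by omega⟩
    have hspec : x (m + 1) = false := by rw [← hmeq]; exact Nat.find_spec h
    have hmin : ∀ j, j < m + 1 → x j ≠ false := by
      intro j hj
      exact Nat.find_min h (by omega)
    have hf' : Nat.find h' = m := by
      rw [Nat.find_eq_iff]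
      constructor
      · exact hspec
      · intro j hj hc
        exact hmin (j + 1) (by omega) hc
    funext k
    simp only [addingMachine, dif_pos h, dif_pos h', hmeq, hf']
    cases k with
    | zero => simp [cns]
    | succ k =>
      show (if k + 1 < m + 1 then false else if k + 1 = m + 1 then true else x (k + 1))
        = (if k < m then false else if k = m then true else tl x k)
      simp only [tl]
      split_ifs <;> first | rfl | omega
  · have h' : ¬ ∃ n, tl x n = false := by
      intro ⟨n, hn⟩
      exact h ⟨n + 1, hn⟩
    simp only [addingMachine, dif_neg h, dif_neg h']
    funext k
    cases k <;> rfl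

lemma am_am_cns (b : Bool) (y : ℕ → Bool) :
    addingMachine (addingMachine (cns b y)) = cns b (addingMachine y) := by
  cases b with
  | false =>
    rw [am_eq_false (cns false y) rfl]
    show addingMachine (cns true y) = _
    rw [am_eq_true (cns true y) rfl]
    rfl
  | true =>
    rw [am_eq_true (cns true y) rfl]
    show addingMachine (cns false (addingMachine y)) = _
    rw [am_eq_false _ rfl]
    rfl

lemma iter_two_mul : ∀ (m : ℕ) (x : ℕ → Bool),
    addingMachine^[2 * m] x = cns (x 0) (addingMachine^[m] (tl x)) := by
  intro m
  induction m with
  | zero => intro x; simp [cns_tl]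
  | succ m ih =>
    intro x
    have h2 : 2 * (m + 1) = 2 + 2 * m := by ring
    rw [h2, Function.iterate_add_apply, ih x]
    show addingMachine (addingMachine (cns (x 0) (addingMachine^[m] (tl x)))) = _
    rw [am_am_cns]
    rw [← Function.iterate_succ_apply' addingMachine m (tl x)]

lemma iter_pow_succ (n : ℕ) (x : ℕ → Bool) :
    addingMachine^[2 ^ (n + 1)] x = cns (x 0) (addingMachine^[2 ^ n] (tl x)) := by
  rw [show 2 ^ (n + 1) = 2 * 2 ^ n by ring]
  exact iter_two_mul (2 ^ n) x

lemma cv_am_sub_le (y : ℕ → Bool) (h0 : y 0 = true) :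
    cantorVal (addingMachine y) - cantorVal y ≤ -(1/3) := by
  rw [am_eq_true y h0, cv_cns, cv_split y, h0]
  have h1 := cv_le_one (addingMachine (tl y))
  have h2 := cv_nonneg (tl y)
  simp only [if_true, Bool.false_eq_true, if_false]
  linarith

end AMaux

open AMaux in
/-- Digit `x n` here corresponds to `x_{n+1}` in the paper's indexing. -/
theorem stmt_9 (x : ℕ → Bool) : ∀ n : ℕ,
    (x n = false →
      |cantorVal (addingMachine^[2 ^ n] x) - cantorVal x| = 2 / 3 ^ (n + 1)) ∧
    (x n = true → x (n + 1) = false →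
      |cantorVal (addingMachine^[2 ^ n] x) - cantorVal x| = 4 / 3 ^ (n + 2)) ∧
    (x n = true → x (n + 1) = true →
      |cantorVal (addingMachine^[2 ^ n] x) - cantorVal x| > 2 / 3 ^ (n + 1)) := by
  intro n
  induction n generalizing x with
  | zero =>
    rw [pow_zero, Function.iterate_one]
    refine ⟨?_, ?_, ?_⟩
    · intro h0
      have hd : cantorVal (addingMachine x) - cantorVal x = 2/3 := by
        rw [am_eq_false x h0, cv_cns, cv_split x, h0]
        norm_num
      rw [hd]
      norm_num
    · intro h0 h1
      have htl : tl x 0 = false := h1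
      have hd : cantorVal (addingMachine x) - cantorVal x = -(4/9) := by
        rw [am_eq_true x h0, cv_cns, am_eq_false (tl x) htl, cv_cns,
          cv_split x, h0, cv_split (tl x), htl]
        norm_num
        ring
      rw [hd, abs_neg, abs_of_nonneg (by norm_num : (0:ℝ) ≤ 4/9)]
      norm_num
    · intro h0 h1
      have htl : tl x 0 = true := h1
      have hle := cv_am_sub_le (tl x) htl
      have hd : cantorVal (addingMachine x) - cantorVal x
          = (cantorVal (addingMachine (tl x)) - cantorVal (tl x)) / 3 - 2/3 := by
        rw [am_eq_true x h0, cv_cns, cv_split x, h0]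
        simp only [if_true, Bool.false_eq_true, if_false]
        ring
      have hneg : cantorVal (addingMachine x) - cantorVal x ≤ -(7/9) := by
        rw [hd]; linarith
      rw [gt_iff_lt, ← abs_neg, abs_of_nonneg (by linarith : (0:ℝ) ≤ -(cantorVal (addingMachine x) - cantorVal x))]
      norm_num
      linarith
  | succ n ih =>
    have key : cantorVal (addingMachine^[2 ^ (n + 1)] x) - cantorVal x
        = (cantorVal (addingMachine^[2 ^ n] (tl x)) - cantorVal (tl x)) / 3 := by
      rw [iter_pow_succ, cv_cns, cv_split x]
      ring
    have keyabs : |cantorVal (addingMachine^[2 ^ (n + 1)] x) - cantorVal x|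
        = |cantorVal (addingMachine^[2 ^ n] (tl x)) - cantorVal (tl x)| / 3 := by
      rw [key, abs_div, abs_of_nonneg (by norm_num : (0:ℝ) ≤ 3)]
    obtain ⟨ih1, ih2, ih3⟩ := ih (tl x)
    refine ⟨?_, ?_, ?_⟩
    · intro h0
      rw [keyabs, ih1 h0]
      rw [pow_succ]
      ring
    · intro h0 h1
      rw [keyabs, ih2 h0 h1]
      rw [show n + 1 + 2 = (n + 2) + 1 by ring, pow_succ]
      ring
    · intro h0 h1
      rw [keyabs]
      have hgt := ih3 h0 h1
      rw [show n + 1 + 1 = (n + 1) + 1 by ring, pow_succ]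
      rw [gt_iff_lt, div_lt_div_iff₀ (by positivity) (by norm_num)]
      rw [gt_iff_lt, div_lt_iff₀ (by positivity)] at hgt
      nlinarith [pow_pos (show (0:ℝ) < 3 by norm_num) (n + 1)]
end

section
/- For the adding machine T on the Cantor set and β = log_3(2), for every x ∈ C one has liminf_{n→∞} n^{1/β} |T^n(x) - x| ≥ 4/9. -/
open MeasureTheory Filter
open scoped Classical

namespace Stmt11Aux

/-! ### Arithmetic of binary codes -/

/-- sum of bits in `[lo, b)` weighted by `2^l` -/
def U (lo b : ℕ) (x : ℕ → Bool) : ℕ := ∑ l ∈ Finset.Ico lo b, if x l then 2^l else 0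

def V (K : ℕ) (x : ℕ → Bool) : ℕ := U 0 K x

lemma U_succ {lo b : ℕ} (h : lo ≤ b) (x : ℕ → Bool) :
    U lo (b+1) x = U lo b x + (if x b then 2^b else 0) :=
  Finset.sum_Ico_succ_top h _

lemma U_self (lo : ℕ) (x : ℕ → Bool) : U lo lo x = 0 := by simp [U]

lemma U_le {lo b : ℕ} (h : lo ≤ b) (x : ℕ → Bool) : U lo b x + 2^lo ≤ 2^b := by
  induction b with
  | zero => simp_all [U]
  | succ b ih =>
    rcases Nat.lt_or_ge lo (b+1) with hb | hb
    · have hb' : lo ≤ b := Nat.lt_succ_iff.mp hb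
      have h1 := ih hb'
      rw [U_succ hb']
      have h2 : (2:ℕ)^(b+1) = 2^b + 2^b := by rw [pow_succ]; omega
      rw [h2]
      have hp : 0 < (2:ℕ)^b := Nat.pow_pos two_pos
      rcases hxb : x b <;> simp [hxb] <;> omega
    · have : lo = b + 1 := le_antisymm h hb
      subst this; simp [U_self]

lemma V_succ (K : ℕ) (x : ℕ → Bool) :
    V (K+1) x = V K x + (if x K then 2^K else 0) := U_succ (Nat.zero_le _) x

lemma V_lt (K : ℕ) (x : ℕ → Bool) : V K x < 2^K := by
  have h := U_le (Nat.zero_le K) x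
  have : (0:ℕ) < 2^0 := by norm_num
  unfold V; omega

lemma U_split {lo m b : ℕ} (h1 : lo ≤ m) (h2 : m ≤ b) (x : ℕ → Bool) :
    U lo b x = U lo m x + U m b x :=
  (Finset.sum_Ico_consecutive _ h1 h2).symm

lemma dvd_U (lo b : ℕ) (x : ℕ → Bool) : 2^lo ∣ U lo b x := by
  apply Finset.dvd_sum
  intro l hl
  have : lo ≤ l := (Finset.mem_Ico.mp hl).1
  split
  · exact pow_dvd_pow 2 this
  · exact dvd_zero _

lemma U_full {lo b : ℕ} (h : lo ≤ b) (x : ℕ → Bool)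
    (hx : ∀ l, lo ≤ l → l < b → x l = true) : U lo b x + 2^lo = 2^b := by
  induction b with
  | zero => simp_all [U]
  | succ b ih =>
    rcases Nat.lt_or_ge lo (b+1) with hb | hb
    · have hb' : lo ≤ b := Nat.lt_succ_iff.mp hb
      have h1 := ih hb' (fun l ha hc => hx l ha (by omega))
      rw [U_succ hb', hx b hb' (by omega)]
      simp only [if_true]
      rw [pow_succ]; omega
    · have : lo = b + 1 := le_antisymm h hb
      subst this; simp [U_self]

lemma V_congr {K : ℕ} {x y : ℕ → Bool} (h : ∀ i < K, x i = y i) : V K x = V K y := by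
  unfold V U
  apply Finset.sum_congr rfl
  intro i hi
  rw [h i (Finset.mem_Ico.mp hi).2]

/-- decide bit from the residue mod `2^(k+1)` -/
lemma testBit_iff (M k : ℕ) : M.testBit k = true ↔ 2^k ≤ M % 2^(k+1) := by
  have h1 : (M % 2^(k+1)).testBit k = M.testBit k := by
    rw [Nat.testBit_mod_two_pow]; simp
  rw [← h1, Nat.testBit_eq_decide_div_mod_eq]
  have hlt : M % 2^(k+1) < 2^(k+1) := Nat.mod_lt _ (by positivity)
  have hp : 0 < (2:ℕ)^k := Nat.pow_pos two_pos
  have hd : M % 2^(k+1) / 2^k < 2 :=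
    (Nat.div_lt_iff_lt_mul hp).mpr (by rw [mul_comm, ← pow_succ]; exact hlt)
  have hle : 2^k ≤ M % 2^(k+1) ↔ 1 ≤ M % 2^(k+1) / 2^k := (Nat.one_le_div_iff hp).symm
  rw [hle]
  simp only [decide_eq_true_eq]
  generalize M % 2^(k+1) / 2^k = d at hd ⊢
  omega

lemma testBit_true {M k : ℕ} (h : 2^k ≤ M % 2^(k+1)) : M.testBit k = true :=
  (testBit_iff M k).mpr h

lemma testBit_false {M k : ℕ} (h : M % 2^(k+1) < 2^k) : M.testBit k = false := by
  cases h' : M.testBit k with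
  | false => rfl
  | true => exact absurd ((testBit_iff M k).mp h') (by omega)

lemma testBit_false_iff (M k : ℕ) : M.testBit k = false ↔ M % 2^(k+1) < 2^k := by
  constructor
  · intro h
    by_contra hc
    rw [testBit_true (by omega)] at h
    simp at h
  · exact testBit_false

lemma mod_two_pow_add_dvd {A B n : ℕ} (h : 2^n ∣ B) : (A + B) % 2^n = A % 2^n := by
  obtain ⟨c, hc⟩ := h
  rw [hc, Nat.add_mul_mod_self_left]

/-- bits of `r + U lo b x` in `[lo, b)` are those of `x`, if `r < 2^lo`. -/
lemma testBit_add_U {lo b i r : ℕ} (x : ℕ → Bool) (h1 : lo ≤ i) (h2 : i < b)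
    (hr : r < 2^lo) : (r + U lo b x).testBit i = x i := by
  have hsplit : U lo b x = U lo (i+1) x + U (i+1) b x := U_split (by omega) (by omega) x
  have hdvd : 2^(i+1) ∣ U (i+1) b x := dvd_U _ _ x
  have hsplit2 : U lo (i+1) x = U lo i x + (if x i then 2^i else 0) := U_succ h1 x
  have hUle : U lo i x + 2^lo ≤ 2^i := U_le h1 x
  have hUle2 : U lo (i+1) x + 2^lo ≤ 2^(i+1) := U_le (by omega) x
  have hmod : (r + U lo b x) % 2^(i+1) = r + U lo (i+1) x := by
    rw [hsplit, ← Nat.add_assoc, mod_two_pow_add_dvd hdvd]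
    exact Nat.mod_eq_of_lt (by omega)
  cases hxi : x i with
  | true =>
    apply testBit_true
    rw [hmod, hsplit2, hxi]; simp only [if_true]; omega
  | false =>
    apply testBit_false
    rw [hmod, hsplit2, hxi]; simp only [Bool.false_eq_true, if_false]; omega

/-! ### The adding machine as addition -/

lemma allones {n : ℕ} {x : ℕ → Bool} (i : ℕ)
    (h : ∀ l, l ≤ i → (n + V (l+1) x).testBit l = true) :
    (n + V (i+1) x) % 2^(i+1) = 2^(i+1) - 1 := by
  induction i with
  | zero =>
    have h0 := (testBit_iff _ 0).mp (h 0 le_rfl)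
    have : (n + V 1 x) % 2^1 < 2^1 := Nat.mod_lt _ (by norm_num)
    norm_num at h0 this ⊢
    omega
  | succ i ih =>
    have hA := ih (fun l hl => h l (by omega))
    have hB := (testBit_iff _ (i+1)).mp (h (i+1) le_rfl)
    have hVs : V (i+2) x = V (i+1) x + (if x (i+1) then 2^(i+1) else 0) := V_succ _ x
    have hdvd : 2^(i+1) ∣ (if x (i+1) then 2^(i+1) else 0) := by split <;> simp
    have hmod : (n + V (i+2) x) % 2^(i+1) = (n + V (i+1) x) % 2^(i+1) := by
      rw [hVs, ← Nat.add_assoc, mod_two_pow_add_dvd hdvd]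
    set s := (n + V (i+2) x) % 2^(i+2) with hs
    have hslt : s < 2^(i+2) := Nat.mod_lt _ (by positivity)
    have hsm : s % 2^(i+1) = 2^(i+1) - 1 := by
      rw [hs, Nat.mod_mod_of_dvd _ (pow_dvd_pow 2 (by omega)), hmod, hA]
    have hp1 : (0:ℕ) < 2^(i+1) := Nat.pow_pos two_pos
    have hpow : (2:ℕ)^(i+2) = 2 * 2^(i+1) := by rw [pow_succ]; ring
    have hsub : s % 2^(i+1) = s - 2^(i+1) := by
      rw [Nat.mod_eq_sub_mod hB, Nat.mod_eq_of_lt (by omega)]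
    omega

lemma key (n : ℕ) (x : ℕ → Bool) : ∀ k,
    addingMachine^[n] x k = (n + V (k+1) x).testBit k := by
  induction n with
  | zero =>
    intro k
    simp only [Function.iterate_zero, id_eq]
    show x k = (0 + U 0 (k+1) x).testBit k
    exact (testBit_add_U (lo := 0) (r := 0) x (Nat.zero_le k) (Nat.lt_succ_self k)
      (by norm_num)).symm
  | succ n IH =>
    intro k
    rw [Function.iterate_succ_apply']
    set y := addingMachine^[n] x with hy
    show addingMachine y k = _
    unfold addingMachine
    by_cases h : ∃ i, y i = false
    · rw [dif_pos h]
      obtain ⟨j, hjdef⟩ : ∃ j, Nat.find h = j := ⟨_, rfl⟩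
      simp only [hjdef]
      show (if k < j then false else if k = j then true else y k) = _
      have hj : y j = false := hjdef ▸ Nat.find_spec h
      have hmin : ∀ l, l < j → y l = true := by
        intro l hl
        have := Nat.find_min h (hjdef ▸ hl)
        simpa using this
      have hsj : (n + V (j+1) x) % 2^(j+1) = 2^j - 1 := by
        have hbit : (n + V (j+1) x).testBit j = false := by rw [← IH j]; exact hj
        have hlt : (n + V (j+1) x) % 2^(j+1) < 2^j := (testBit_false_iff _ _).mp hbit
        rcases Nat.eq_zero_or_pos j with hj0 | hj0
        · subst hj0; norm_num at hlt ⊢; omega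
        · obtain ⟨i, rfl⟩ : ∃ i, j = i + 1 := ⟨j - 1, by omega⟩
          have hA : (n + V (i+1) x) % 2^(i+1) = 2^(i+1) - 1 :=
            allones i (fun l hl => by rw [← IH l]; exact hmin l (by omega))
          have hVs : V (i+2) x = V (i+1) x + (if x (i+1) then 2^(i+1) else 0) := V_succ _ x
          have hdvd : 2^(i+1) ∣ (if x (i+1) then 2^(i+1) else 0) := by split <;> simp
          have hmod : (n + V (i+2) x) % 2^(i+1) = 2^(i+1) - 1 := by
            rw [hVs, ← Nat.add_assoc, mod_two_pow_add_dvd hdvd, hA]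
          have hmm : (n + V (i+2) x) % 2^(i+2) % 2^(i+1) = 2^(i+1) - 1 := by
            rw [Nat.mod_mod_of_dvd _ (pow_dvd_pow 2 (by omega)), hmod]
          have hlt2 : (n + V (i+2) x) % 2^(i+2) < 2^(i+1) := hlt
          rw [Nat.mod_eq_of_lt hlt2] at hmm
          exact hmm
      rcases lt_trichotomy k j with hk | hk | hk
      · rw [if_pos hk]
        have hA : (n + V (k+1) x) % 2^(k+1) = 2^(k+1) - 1 :=
          allones k (fun l hl => by rw [← IH l]; exact hmin l (by omega))
        have hp : (0:ℕ) < 2^(k+1) := Nat.pow_pos two_pos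
        have : (n + 1 + V (k+1) x) % 2^(k+1) = 0 := by
          have he : n + 1 + V (k+1) x = (n + V (k+1) x) + 1 := by omega
          rw [he, Nat.add_mod, hA]
          have h1 : (1:ℕ) % 2^(k+1) = 1 := Nat.mod_eq_of_lt (by
            have : (2:ℕ)^1 ≤ 2^(k+1) := Nat.pow_le_pow_right (by norm_num) (by omega)
            omega)
          rw [h1]
          have : 2^(k+1) - 1 + 1 = 2^(k+1) := by omega
          rw [this, Nat.mod_self]
        exact (testBit_false (by
          have hp2 : (0:ℕ) < 2^k := Nat.pow_pos two_pos
          omega)).symm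
      · rw [if_neg (by omega), if_pos hk]
        rw [← hk] at hsj
        have hp : (0:ℕ) < 2^k := Nat.pow_pos two_pos
        have hp1 : (0:ℕ) < 2^(k+1) := Nat.pow_pos two_pos
        have hpow : (2:ℕ)^(k+1) = 2 * 2^k := by rw [pow_succ]; ring
        have : (n + 1 + V (k+1) x) % 2^(k+1) = 2^k := by
          have he : n + 1 + V (k+1) x = (n + V (k+1) x) + 1 := by omega
          rw [he, Nat.add_mod, hsj]
          have h1 : (1:ℕ) % 2^(k+1) = 1 := Nat.mod_eq_of_lt (by omega)
          rw [h1]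
          have h2 : 2^k - 1 + 1 = 2^k := by omega
          rw [h2, Nat.mod_eq_of_lt (by omega)]
        exact (testBit_true (by omega)).symm
      · rw [if_neg (by omega), if_neg (by omega), IH k]
        set A := n + V (k+1) x with hA
        have hsplit : V (k+1) x = V (j+1) x + U (j+1) (k+1) x := U_split (by omega) (by omega) x
        have hAm : A % 2^(j+1) = 2^j - 1 := by
          rw [hA, hsplit, ← Nat.add_assoc, mod_two_pow_add_dvd (dvd_U _ _ x), hsj]
        have hp : (0:ℕ) < 2^(j+1) := Nat.pow_pos two_pos
        have hpj : (0:ℕ) < 2^j := Nat.pow_pos two_pos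
        have hpow : (2:ℕ)^(j+1) = 2 * 2^j := by rw [pow_succ]; ring
        obtain ⟨q, hq⟩ : ∃ q, A = 2^(j+1) * q + (2^j - 1) :=
          ⟨A / 2^(j+1), by have := Nat.div_add_mod A (2^(j+1)); omega⟩
        have hdivA : A / 2^(j+1) = q := by
          rw [hq, Nat.mul_add_div hp, Nat.div_eq_of_lt (by omega)]
          omega
        have hdivA1 : (A + 1) / 2^(j+1) = q := by
          have hA1 : A + 1 = 2^(j+1) * q + 2^j := by omega
          rw [hA1, Nat.mul_add_div hp, Nat.div_eq_of_lt (by omega)]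
          omega
        have he : n + 1 + V (k+1) x = A + 1 := by omega
        rw [he]
        obtain ⟨d, hd⟩ : ∃ d, k = (j+1) + d := ⟨k - (j+1), by omega⟩
        subst hd
        rw [← Nat.testBit_shiftRight, ← Nat.testBit_shiftRight,
          Nat.shiftRight_eq_div_pow, Nat.shiftRight_eq_div_pow, hdivA, hdivA1]
    · rw [dif_neg h]
      push_neg at h
      have hall : ∀ i, y i = true := by
        intro i; have := h i; simpa using this
      have hA : (n + V (k+1) x) % 2^(k+1) = 2^(k+1) - 1 :=
        allones k (fun l _ => by rw [← IH l]; exact hall l)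
      have hp : (0:ℕ) < 2^(k+1) := Nat.pow_pos two_pos
      have hp2 : (0:ℕ) < 2^k := Nat.pow_pos two_pos
      have hz : (n + 1 + V (k+1) x) % 2^(k+1) = 0 := by
        have he : n + 1 + V (k+1) x = (n + V (k+1) x) + 1 := by omega
        rw [he, Nat.add_mod, hA]
        have h1 : (1:ℕ) % 2^(k+1) = 1 := Nat.mod_eq_of_lt (by omega)
        rw [h1]
        have h2 : 2^(k+1) - 1 + 1 = 2^(k+1) := by omega
        rw [h2, Nat.mod_self]
      exact (testBit_false (by omega)).symm

lemma V_iter (n K : ℕ) (x : ℕ → Bool) :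
    V K (addingMachine^[n] x) = (n + V K x) % 2^K := by
  induction K with
  | zero => simp [V, U_self, Nat.mod_one]
  | succ K ih =>
    rw [V_succ K (addingMachine^[n] x), ih, key n x K]
    have hVs : V (K+1) x = V K x + (if x K then 2^K else 0) := V_succ _ _
    set A := n + V (K+1) x with hA
    have hmodK : A % 2^K = (n + V K x) % 2^K := by
      rw [hA, hVs, ← Nat.add_assoc, mod_two_pow_add_dvd (by split <;> simp)]
    have hdecomp : A % 2^(K+1) = A % 2^K + 2^K * (A / 2^K % 2) := by
      rw [pow_succ]; exact Nat.mod_mul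
    rw [Nat.testBit_eq_decide_div_mod_eq]
    rcases Nat.mod_two_eq_zero_or_one (A / 2^K) with h2 | h2 <;>
      rw [hdecomp, hmodK, h2] <;> norm_num



noncomputable def dd (x y : ℕ → Bool) (k : ℕ) : ℝ :=
  (if y k then (2:ℝ) else 0) / 3 ^ (k+1) - (if x k then (2:ℝ) else 0) / 3 ^ (k+1)

lemma gterm (K k : ℕ) : (2:ℝ)/3^(k+K+1) = (2/3^(K+1)) * (1/3)^k := by
  rw [div_pow, one_pow, show k+K+1 = (K+1)+k by omega, pow_add]
  rw [div_mul_div_comm, mul_one]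

lemma summable_geom_tail (K : ℕ) : Summable (fun k : ℕ => (2:ℝ)/3^(k+K+1)) :=
  Summable.congr ((summable_geometric_of_lt_one (r := 1/3) (by norm_num)
    (by norm_num)).mul_left (2/3^(K+1))) (fun k => (gterm K k).symm)

lemma summable_c (x : ℕ → Bool) :
    Summable (fun k : ℕ => (if x k then (2:ℝ) else 0) / 3 ^ (k + 1)) := by
  refine Summable.of_nonneg_of_le (fun k => by positivity) (fun k => ?_)
    (summable_geom_tail 0)
  rw [show k+0+1 = k+1 by omega]
  gcongr
  split <;> norm_num

lemma summable_dd (x y : ℕ → Bool) : Summable (dd x y) :=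
  (summable_c y).sub (summable_c x)

lemma diff_eq (x y : ℕ → Bool) : cantorVal y - cantorVal x = ∑' k, dd x y k :=
  (Summable.tsum_sub (summable_c y) (summable_c x)).symm

lemma dd_zero {x y : ℕ → Bool} {k : ℕ} (h : y k = x k) : dd x y k = 0 := by
  unfold dd; rw [h]; ring

lemma dd_neg {x y : ℕ → Bool} {k : ℕ} (hy : y k = false) (hx : x k = true) :
    dd x y k = -(2 / 3^(k+1)) := by
  unfold dd; rw [hy, hx]; norm_num

lemma dd_pos {x y : ℕ → Bool} {k : ℕ} (hy : y k = true) (hx : x k = false) :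
    dd x y k = 2 / 3^(k+1) := by
  unfold dd; rw [hy, hx]; norm_num

lemma abs_dd_ne {x y : ℕ → Bool} {k : ℕ} (h : y k ≠ x k) : |dd x y k| = 2 / 3^(k+1) := by
  rcases hy : y k <;> rcases hx : x k <;> rw [hy, hx] at h
  · exact absurd rfl h
  · rw [dd_neg hy hx, abs_neg, abs_of_nonneg (by positivity)]
  · rw [dd_pos hy hx, abs_of_nonneg (by positivity)]
  · exact absurd rfl h

lemma abs_dd_le (x y : ℕ → Bool) (k : ℕ) : |dd x y k| ≤ 2 / 3^(k+1) := by
  by_cases h : y k = x k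
  · rw [dd_zero h, abs_zero]; positivity
  · exact le_of_eq (abs_dd_ne h)

lemma geom_tail (K : ℕ) : ∑' k : ℕ, (2:ℝ) / 3^(k+K+1) = (1/3)^K := by
  rw [tsum_congr (gterm K), tsum_mul_left,
    tsum_geometric_of_lt_one (by norm_num) (by norm_num)]
  rw [div_pow, one_pow, pow_succ]
  rw [show (1:ℝ) - 1/3 = 2/3 by norm_num]
  field_simp

lemma summable_tail (x y : ℕ → Bool) (K : ℕ) : Summable (fun k => dd x y (k + K)) :=
  (summable_nat_add_iff K).mpr (summable_dd x y)

lemma tail_abs_le (x y : ℕ → Bool) (K : ℕ) : |∑' k : ℕ, dd x y (k + K)| ≤ (1/3:ℝ)^K := by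
  have hsum := summable_tail x y K
  calc |∑' k : ℕ, dd x y (k + K)| ≤ ∑' k : ℕ, |dd x y (k + K)| := by
        have := norm_tsum_le_tsum_norm (f := fun k => dd x y (k + K))
          (by simpa [Real.norm_eq_abs] using hsum.abs)
        simpa [Real.norm_eq_abs] using this
  _ ≤ ∑' k : ℕ, (2:ℝ)/3^(k+K+1) :=
        Summable.tsum_le_tsum (fun k => abs_dd_le x y (k+K)) hsum.abs (summable_geom_tail K)
  _ = (1/3)^K := geom_tail K

lemma abs_lower (a b : ℝ) : |a| - |b| ≤ |a + b| := by
  have h := abs_sub_abs_le_abs_sub a (-b)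
  rw [abs_neg, sub_neg_eq_add] at h
  exact h

lemma pow3_cancel (m : ℕ) : (3:ℝ)^m * (1/3)^m = 1 := by
  rw [← mul_pow]; norm_num

lemma two_div_eq (m : ℕ) : (2:ℝ)/3^(m+1) = 2/3 * (1/3)^m := by
  rw [div_pow, one_pow, pow_succ, div_mul_div_comm, mul_one, mul_comm]

lemma two_div_eq2 (m : ℕ) : (2:ℝ)/3^(m+2) = 2/9 * (1/3)^m := by
  rw [div_pow, one_pow, pow_add]
  norm_num
  ring

lemma testBit_congr {A B i : ℕ} (h : A % 2^(i+1) = B % 2^(i+1)) :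
    A.testBit i = B.testBit i := by
  cases hb : B.testBit i with
  | false => exact testBit_false (h ▸ (testBit_false_iff B i).mp hb)
  | true => exact testBit_true (h ▸ (testBit_iff B i).mp hb)

lemma main_bound (x : ℕ → Bool) {n : ℕ} (hn : 1 ≤ n) :
    4/9 * (1/3:ℝ)^(Nat.log 2 n) ≤ |cantorVal (addingMachine^[n] x) - cantorVal x| := by
  obtain ⟨m, hm⟩ : ∃ m, Nat.log 2 n = m := ⟨_, rfl⟩
  obtain ⟨y, hy⟩ : ∃ y, addingMachine^[n] x = y := ⟨_, rfl⟩
  rw [hm, hy]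
  have hpm : (0:ℕ) < 2^m := Nat.pow_pos two_pos
  have hpm1 : (0:ℕ) < 2^(m+1) := Nat.pow_pos two_pos
  have hpw : (2:ℕ)^(m+1) = 2*2^m := by rw [pow_succ]; ring
  have hmn : 2^m ≤ n := hm ▸ Nat.pow_log_le_self 2 (by omega)
  have hmn2 : n < 2^(m+1) := hm ▸ Nat.lt_pow_succ_log_self (by norm_num) n
  have hyd : ∀ k, y k = (n + V (k+1) x).testBit k := fun k => hy ▸ key n x k
  have hdiffeq : cantorVal y - cantorVal x = ∑' k, dd x y k := diff_eq x y
  have hVx1 : V (m+1) x < 2^(m+1) := V_lt _ x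
  have hVmlt : V m x < 2^m := V_lt m x
  have hex2 : ∃ i, i ≤ m ∧ y i ≠ x i := by
    by_contra hcon
    push_neg at hcon
    have h1 : V (m+1) y = V (m+1) x := V_congr (fun i hi => hcon i (by omega))
    rw [← hy, V_iter n (m+1) x] at h1
    obtain ⟨q, hq⟩ : ∃ q, n + V (m+1) x = 2^(m+1) * q + V (m+1) x :=
      ⟨(n + V (m+1) x)/2^(m+1), by
        have := Nat.div_add_mod (n + V (m+1) x) (2^(m+1)); omega⟩
    rcases Nat.eq_zero_or_pos q with h0 | h0
    · rw [h0, mul_zero, zero_add] at hq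
      omega
    · have : 2^(m+1) * 1 ≤ 2^(m+1) * q := Nat.mul_le_mul_left _ h0
      omega
  have hex : ∃ i, y i ≠ x i := by obtain ⟨i, _, h⟩ := hex2; exact ⟨i, h⟩
  obtain ⟨k, hkdef⟩ : ∃ k, Nat.find hex = k := ⟨_, rfl⟩
  have hkne : y k ≠ x k := hkdef ▸ Nat.find_spec hex
  have hklow : ∀ l, l < k → y l = x l := by
    intro l hl
    have := Nat.find_min hex (hkdef ▸ hl)
    simpa using this
  have hkm : k ≤ m := by
    obtain ⟨i, him, hine⟩ := hex2
    exact le_trans (hkdef ▸ Nat.find_min' hex hine) him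
  rcases Nat.lt_or_ge k m with hkm' | hkm'
  · -- k < m : generic estimate
    have hsum : ∑ i ∈ Finset.range (k+1), dd x y i = dd x y k := by
      rw [Finset.sum_range_succ, Finset.sum_eq_zero, zero_add]
      intro i hi
      exact dd_zero (hklow i (Finset.mem_range.mp hi))
    have hdm : cantorVal y - cantorVal x = dd x y k + ∑' i : ℕ, dd x y (i + (k+1)) := by
      rw [hdiffeq, ← Summable.sum_add_tsum_nat_add (k+1) (summable_dd x y), hsum]
    have htail := tail_abs_le x y (k+1)
    have h1 : (1/3:ℝ)^(k+1) ≤ |cantorVal y - cantorVal x| := by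
      rw [hdm]
      have h2 := abs_lower (dd x y k) (∑' i : ℕ, dd x y (i + (k+1)))
      rw [abs_dd_ne hkne] at h2
      have h3 : (2:ℝ)/3^(k+1) = 2 * (1/3)^(k+1) := by
        rw [div_pow, one_pow]; ring
      linarith
    refine le_trans ?_ h1
    have h4 : (1/3:ℝ)^m ≤ (1/3)^(k+1) :=
      pow_le_pow_of_le_one (by norm_num) (by norm_num) (by omega)
    nlinarith [pow_nonneg (by norm_num : (0:ℝ) ≤ 1/3) m]
  · -- k = m
    have hkm2 : k = m := le_antisymm hkm hkm'
    have hknem : y m ≠ x m := hkm2 ▸ hkne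
    have hklowm : ∀ l, l < m → y l = x l := fun l hl => hklow l (by omega)
    by_cases hc : n + V (m+1) x < 2^(m+1)
    · -- no carry out of the window
      have htail0 : ∀ i, m+1 ≤ i → y i = x i := by
        intro i hi
        rw [hyd i]
        have hsp : V (i+1) x = V (m+1) x + U (m+1) (i+1) x := U_split (by omega) (by omega) x
        rw [show n + V (i+1) x = (n + V (m+1) x) + U (m+1) (i+1) x by omega]
        exact testBit_add_U x hi (by omega) hc
      have hsum : ∑ i ∈ Finset.range (m+1), dd x y i = dd x y m := by
        rw [Finset.sum_range_succ, Finset.sum_eq_zero, zero_add]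
        intro i hi
        exact dd_zero (hklowm i (Finset.mem_range.mp hi))
      have htailz : ∑' i : ℕ, dd x y (i + (m+1)) = 0 := by
        rw [tsum_congr (fun i => dd_zero (htail0 (i+(m+1)) (by omega)))]
        exact tsum_zero
      have hdm : cantorVal y - cantorVal x = dd x y m := by
        rw [hdiffeq, ← Summable.sum_add_tsum_nat_add (m+1) (summable_dd x y), hsum, htailz, add_zero]
      rw [hdm, abs_dd_ne hknem, two_div_eq m]
      nlinarith [pow_nonneg (by norm_num : (0:ℝ) ≤ 1/3) m]
    · push_neg at hc
      have hn2 : n = 2^m := by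
        have hVmy : V m y = V m x := V_congr (fun i hi => hklowm i hi)
        have h1 : (n + V m x) % 2^m = V m x := by
          rw [← V_iter n m x, hy, hVmy]
        have hs : n % 2^m = 0 := by
          have h2 : (n % 2^m + V m x) % 2^m = V m x := by rw [Nat.mod_add_mod]; exact h1
          have h3 : n % 2^m < 2^m := Nat.mod_lt _ hpm
          rcases Nat.lt_or_ge (n % 2^m + V m x) (2^m) with h4 | h4
          · rw [Nat.mod_eq_of_lt h4] at h2; omega
          · rw [Nat.mod_eq_sub_mod h4, Nat.mod_eq_of_lt (by omega)] at h2; omega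
        obtain ⟨q, hq⟩ := Nat.dvd_of_mod_eq_zero hs
        rcases Nat.lt_or_ge q 2 with hq2 | hq2
        · interval_cases q <;> omega
        · have : 2^m * 2 ≤ 2^m * q := Nat.mul_le_mul_left _ hq2
          omega
      have hxm : x m = true := by
        by_contra hxm'
        have hxm2 : x m = false := by
          cases hxmm : x m
          · rfl
          · exact absurd hxmm hxm'
        have hVs : V (m+1) x = V m x + (if x m then 2^m else 0) := V_succ m x
        rw [hxm2] at hVs
        simp at hVs
        omega
      have hVm1 : V (m+1) x = V m x + 2^m := by rw [V_succ m x, hxm]; simp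
      have hym : y m = false := by
        rw [hyd m, hn2, hVm1]
        apply testBit_false
        rw [show 2^m + (V m x + 2^m) = V m x + 2^(m+1) by omega,
          mod_two_pow_add_dvd dvd_rfl, Nat.mod_eq_of_lt (by omega)]
        omega
      by_cases hEx : ∃ i, m+1 ≤ i ∧ x i = false
      · obtain ⟨j, hjdef⟩ : ∃ j, Nat.find hEx = j := ⟨_, rfl⟩
        obtain ⟨hj1, hj2⟩ : m+1 ≤ j ∧ x j = false := hjdef ▸ Nat.find_spec hEx
        have hjmin : ∀ l, m+1 ≤ l → l < j → x l = true := by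
          intro l hl1 hl2
          have hnot := Nat.find_min hEx (hjdef ▸ hl2)
          cases hxl : x l
          · exact absurd ⟨hl1, hxl⟩ hnot
          · rfl
        have hpj : (0:ℕ) < 2^j := Nat.pow_pos two_pos
        have hpwj : (2:ℕ)^(j+1) = 2*2^j := by rw [pow_succ]; ring
        have h2mj : (2:ℕ)^m ≤ 2^j := Nat.pow_le_pow_right (by norm_num) (by omega)
        have hmid : ∀ i, m < i → i < j → y i = false := by
          intro i h1 h2
          have hpwi : (2:ℕ)^(i+1) = 2*2^i := by rw [pow_succ]; ring
          have h2mi : (2:ℕ)^m ≤ 2^i := Nat.pow_le_pow_right (by norm_num) (by omega)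
          rw [hyd i, hn2]
          have hsp : V (i+1) x = V (m+1) x + U (m+1) (i+1) x := U_split (by omega) (by omega) x
          have hfull : U (m+1) (i+1) x + 2^(m+1) = 2^(i+1) :=
            U_full (by omega) x (fun l hl1 hl2 => hjmin l hl1 (by omega))
          rw [show 2^m + V (i+1) x = V m x + 2^(i+1) by omega]
          apply testBit_false
          rw [mod_two_pow_add_dvd dvd_rfl, Nat.mod_eq_of_lt (by omega)]
          omega
        have hej : 2^m + V (j+1) x = V m x + 2^j := by
          have hsp : V (j+1) x = V (m+1) x + U (m+1) (j+1) x := U_split (by omega) (by omega) x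
          have hU : U (m+1) (j+1) x = U (m+1) j x := by
            rw [U_succ (by omega) x, hj2]; simp
          have hfull : U (m+1) j x + 2^(m+1) = 2^j := U_full hj1 x hjmin
          omega
        have hyj : y j = true := by
          rw [hyd j, hn2, hej]
          apply testBit_true
          rw [Nat.mod_eq_of_lt (by omega)]
          omega
        have hhigh : ∀ i, j < i → y i = x i := by
          intro i hi
          rw [hyd i, hn2]
          have hsp : V (i+1) x = V (j+1) x + U (j+1) (i+1) x := U_split (by omega) (by omega) x
          rw [show 2^m + V (i+1) x = (V m x + 2^j) + U (j+1) (i+1) x by omega]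
          exact testBit_add_U x (by omega) (by omega) (by omega)
        have hddmid : ∀ i, i < j → i ≠ m → dd x y i ≤ 0 := by
          intro i hij him
          rcases Nat.lt_or_ge i m with h | h
          · rw [dd_zero (hklowm i h)]
          · have h1 : m < i := by omega
            rw [dd_neg (hmid i h1 hij) (hjmin i (by omega) hij)]
            have : (0:ℝ) ≤ 2/3^(i+1) := by positivity
            linarith
        have hsum1 : ∑ i ∈ Finset.range j, dd x y i ≤ dd x y m := by
          have hsub : {m} ⊆ Finset.range j := by
            intro i hi
            simp only [Finset.mem_singleton] at hi
            subst hi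
            simp only [Finset.mem_range]
            omega
          have h2 := Finset.sum_le_sum_of_subset_of_nonneg
            (f := fun i => -dd x y i) hsub ?_
          · rw [Finset.sum_singleton, Finset.sum_neg_distrib] at h2
            linarith
          · intro i hi him
            simp only [Finset.mem_singleton] at him
            have := hddmid i (Finset.mem_range.mp hi) him
            show (0:ℝ) ≤ -dd x y i
            linarith
        have hsum : ∑ i ∈ Finset.range (j+1), dd x y i ≤ dd x y m + dd x y j := by
          rw [Finset.sum_range_succ]
          linarith
        have htailz : ∑' i : ℕ, dd x y (i + (j+1)) = 0 := by
          rw [tsum_congr (fun i => dd_zero (hhigh (i+(j+1)) (by omega)))]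
          exact tsum_zero
        have hdiff : cantorVal y - cantorVal x ≤ dd x y m + dd x y j := by
          rw [hdiffeq, ← Summable.sum_add_tsum_nat_add (j+1) (summable_dd x y), htailz, add_zero]
          exact hsum
        have hdmv : dd x y m = -(2/3^(m+1)) := dd_neg hym hxm
        have hdjv : dd x y j = 2/3^(j+1) := dd_pos hyj hj2
        have hdjle : (2:ℝ)/3^(j+1) ≤ 2/3^(m+2) := by
          apply div_le_div_of_nonneg_left (by norm_num) (by positivity)
          exact pow_le_pow_right₀ (by norm_num) (by omega)
        have hfin : cantorVal y - cantorVal x ≤ -(2/3^(m+1)) + 2/3^(m+2) := by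
          rw [hdmv, hdjv] at hdiff
          linarith
        have hfin2 : cantorVal y - cantorVal x ≤ -(4/9 * (1/3)^m) := by
          rw [two_div_eq m, two_div_eq2 m] at hfin
          linarith
        calc 4/9 * (1/3:ℝ)^m ≤ -(cantorVal y - cantorVal x) := by linarith
        _ ≤ |cantorVal y - cantorVal x| := neg_le_abs _
      · push_neg at hEx
        have hxall : ∀ i, m+1 ≤ i → x i = true := by
          intro i hi
          cases hxi : x i
          · exact absurd hxi (hEx i hi)
          · rfl
        have hyall : ∀ i, m < i → y i = false := by
          intro i h1
          have hpwi : (2:ℕ)^(i+1) = 2*2^i := by rw [pow_succ]; ring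
          have h2mi : (2:ℕ)^m ≤ 2^i := Nat.pow_le_pow_right (by norm_num) (by omega)
          rw [hyd i, hn2]
          have hsp : V (i+1) x = V (m+1) x + U (m+1) (i+1) x := U_split (by omega) (by omega) x
          have hfull : U (m+1) (i+1) x + 2^(m+1) = 2^(i+1) :=
            U_full (by omega) x (fun l hl1 _ => hxall l hl1)
          rw [show 2^m + V (i+1) x = V m x + 2^(i+1) by omega]
          apply testBit_false
          rw [mod_two_pow_add_dvd dvd_rfl, Nat.mod_eq_of_lt (by omega)]
          omega
        have hddle : ∀ i, dd x y i ≤ 0 := by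
          intro i
          rcases lt_trichotomy i m with h | h | h
          · rw [dd_zero (hklowm i h)]
          · subst h
            rw [dd_neg hym hxm]
            have : (0:ℝ) ≤ 2/3^(i+1) := by positivity
            linarith
          · rw [dd_neg (hyall i h) (hxall i (by omega))]
            have : (0:ℝ) ≤ 2/3^(i+1) := by positivity
            linarith
        have hsum : ∑ i ∈ Finset.range (m+1), dd x y i = dd x y m := by
          rw [Finset.sum_range_succ, Finset.sum_eq_zero, zero_add]
          intro i hi
          exact dd_zero (hklowm i (Finset.mem_range.mp hi))
        have htaille : ∑' i : ℕ, dd x y (i + (m+1)) ≤ 0 :=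
          tsum_nonpos (fun i => hddle _)
        have hdiff : cantorVal y - cantorVal x ≤ -(2/3^(m+1)) := by
          rw [hdiffeq, ← Summable.sum_add_tsum_nat_add (m+1) (summable_dd x y), hsum,
            dd_neg hym hxm]
          linarith
        have hfin2 : cantorVal y - cantorVal x ≤ -(4/9 * (1/3)^m) := by
          rw [two_div_eq m] at hdiff
          have : (0:ℝ) ≤ (1/3:ℝ)^m := by positivity
          nlinarith
        calc 4/9 * (1/3:ℝ)^m ≤ -(cantorVal y - cantorVal x) := by linarith
        _ ≤ |cantorVal y - cantorVal x| := neg_le_abs _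

lemma upper_2M (x : ℕ → Bool) (M : ℕ) :
    |cantorVal (addingMachine^[2^M] x) - cantorVal x| ≤ (1/3:ℝ)^M := by
  obtain ⟨y, hy⟩ : ∃ y, addingMachine^[2^M] x = y := ⟨_, rfl⟩
  rw [hy]
  have hlow : ∀ i, i < M → y i = x i := by
    intro i hi
    rw [← hy, key (2^M) x i]
    have h1 : (2^M + V (i+1) x) % 2^(i+1) = V (i+1) x % 2^(i+1) := by
      rw [Nat.add_comm]
      exact mod_two_pow_add_dvd (pow_dvd_pow 2 (by omega))
    have hxi : x i = (V (i+1) x).testBit i := by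
      have := key 0 x i
      simpa using this
    rw [testBit_congr h1, ← hxi]
  have hsum : ∑ i ∈ Finset.range M, dd x y i = 0 :=
    Finset.sum_eq_zero (fun i hi => dd_zero (hlow i (Finset.mem_range.mp hi)))
  have hd : cantorVal y - cantorVal x = ∑' i : ℕ, dd x y (i + M) := by
    rw [diff_eq x y, ← Summable.sum_add_tsum_nat_add M (summable_dd x y), hsum, zero_add]
  rw [hd]
  exact tail_abs_le x y M

lemma exponent_eq : (1:ℝ) / Real.logb 3 2 = Real.logb 2 3 := by
  rw [Real.logb, Real.logb, one_div_div]

lemma rpow_23 (M : ℕ) : ((2:ℝ)^M) ^ ((1:ℝ) / Real.logb 3 2) = 3^M := by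
  rw [exponent_eq, ← Real.rpow_natCast 2 M, ← Real.rpow_mul (by norm_num), mul_comm,
    Real.rpow_mul (by norm_num), Real.rpow_logb (by norm_num) (by norm_num) (by norm_num),
    Real.rpow_natCast]

lemma rpow_ge {n : ℕ} (hn : 1 ≤ n) :
    (3:ℝ)^(Nat.log 2 n) ≤ (n:ℝ) ^ ((1:ℝ) / Real.logb 3 2) := by
  rw [← rpow_23 (Nat.log 2 n)]
  apply Real.rpow_le_rpow (by positivity) ?_ ?_
  · exact_mod_cast Nat.pow_log_le_self 2 (by omega)
  · rw [exponent_eq]; exact Real.logb_nonneg (by norm_num) (by norm_num)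


end Stmt11Aux


theorem stmt_11 (x : ℕ → Bool) :
    4 / 9 ≤ liminf (fun n : ℕ =>
        (n : ℝ) ^ (1 / Real.logb 3 2) *
          |cantorVal (addingMachine^[n] x) - cantorVal x|) atTop := by
  have hev : ∀ᶠ n : ℕ in atTop, (4:ℝ)/9 ≤ (n : ℝ) ^ (1 / Real.logb 3 2) *
      |cantorVal (addingMachine^[n] x) - cantorVal x| := by
    filter_upwards [eventually_ge_atTop 1] with n hn
    have h1 := Stmt11Aux.main_bound x hn
    have h2 := Stmt11Aux.rpow_ge (n := n) hn
    calc (4:ℝ)/9 = 3^(Nat.log 2 n) * (4/9 * (1/3)^(Nat.log 2 n)) := by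
          rw [show (3:ℝ)^(Nat.log 2 n) * (4/9 * (1/3)^(Nat.log 2 n))
              = 4/9 * (3^(Nat.log 2 n) * (1/3)^(Nat.log 2 n)) by ring,
            Stmt11Aux.pow3_cancel, mul_one]
    _ ≤ (n : ℝ) ^ (1 / Real.logb 3 2) * |cantorVal (addingMachine^[n] x) - cantorVal x| := by
          apply mul_le_mul h2 h1 (by positivity) (by positivity)
  apply Filter.le_liminf_of_le ?_ hev
  refine ⟨1, fun a ha => ?_⟩
  rw [Filter.eventually_map] at ha
  obtain ⟨N, hN⟩ := Filter.eventually_atTop.mp ha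
  have h2N : N ≤ 2^N := (Nat.lt_two_pow_self (n := N)).le
  refine le_trans (hN (2^N) h2N) ?_
  have hup := Stmt11Aux.upper_2M x N
  have hr : ((2^N : ℕ) : ℝ) ^ ((1:ℝ) / Real.logb 3 2) = 3^N := by
    push_cast
    exact Stmt11Aux.rpow_23 N
  have hfin : ((2^N : ℕ) : ℝ) ^ ((1:ℝ) / Real.logb 3 2) *
      |cantorVal (addingMachine^[2^N] x) - cantorVal x| ≤ 3^N * (1/3)^N := by
    rw [hr]
    apply mul_le_mul_of_nonneg_left hup (by positivity)
  rw [Stmt11Aux.pow3_cancel] at hfin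
  exact hfin
end

section
/- The log_3(2)-dimensional Hausdorff measure of the middle-third Cantor set is at least (4/9)^{log_3 2}. -/
open MeasureTheory Filter
open scoped Classical ENNReal

namespace Stmt13

local instance : TopologicalSpace (ZMod 2) := ⊥
local instance : DiscreteTopology (ZMod 2) := ⟨rfl⟩
local instance : IsTopologicalAddGroup (ZMod 2) :=
  { continuous_add := continuous_of_discreteTopology
    continuous_neg := continuous_of_discreteTopology }
local instance : MeasurableSpace (ZMod 2) := ⊤
local instance : BorelSpace (ZMod 2) := ⟨(borel_eq_top_of_discrete).symm⟩

abbrev G : Type := ℕ → ZMod 2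

noncomputable def muG : Measure G := Measure.addHaarMeasure ⊤

instance : muG.IsAddLeftInvariant :=
  Measure.isAddLeftInvariant_addHaarMeasure ⊤

lemma muG_univ : muG Set.univ = 1 := by
  have := Measure.addHaarMeasure_self (K₀ := (⊤ : TopologicalSpace.PositiveCompacts G))
  rwa [TopologicalSpace.PositiveCompacts.coe_top] at this

def Cyl (n : ℕ) (v : G) : Set G := {x | ∀ i < n, x i = v i}

lemma measurableSet_cyl (n : ℕ) (v : G) : MeasurableSet (Cyl n v) := by
  have : Cyl n v = ⋂ i ∈ Set.Iio n, (fun x : G => x i) ⁻¹' {v i} := by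
    ext x; simp [Cyl]
  rw [this]
  exact MeasurableSet.biInter (Set.to_countable _)
    (fun i _ => (measurable_pi_apply i) (by trivial))

lemma muG_cyl_eq_zero (n : ℕ) (v : G) : muG (Cyl n v) = muG (Cyl n 0) := by
  have h : Cyl n v = (fun x : G => v + x) ⁻¹' (Cyl n 0) := by
    ext x
    have h2 : ∀ a b : ZMod 2, a + b = 0 ↔ b = a := by decide
    simp only [Cyl, Set.mem_setOf_eq, Set.mem_preimage, Pi.add_apply, Pi.zero_apply]
    exact forall₂_congr fun i _ => (h2 (v i) (x i)).symm
  rw [h, measure_preimage_add]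

lemma muG_cyl (n : ℕ) (v : G) : muG (Cyl n v) = (2 : ℝ≥0∞)⁻¹ ^ n := by
  classical
  set m := muG (Cyl n 0) with hm
  -- partition of univ into 2^n cylinders
  have hext : ∀ w : Fin n → ZMod 2, ∃ u : G, ∀ i : Fin n, u i = w i :=
    fun w => ⟨fun i => if h : i < n then w ⟨i, h⟩ else 0, fun i => by simp [i.isLt]⟩
  set ext : (Fin n → ZMod 2) → G := fun w => fun i => if h : i < n then w ⟨i, h⟩ else 0 with hextdef
  have hmem : ∀ x : G, x ∈ Cyl n (ext fun i : Fin n => x i) := by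
    intro x i hi
    simp [hextdef, hi]
  have hunion : (⋃ w : Fin n → ZMod 2, Cyl n (ext w)) = Set.univ := by
    ext x
    simp only [Set.mem_iUnion, Set.mem_univ, iff_true]
    exact ⟨fun i : Fin n => x i, hmem x⟩
  have hdisj : Pairwise (Function.onFun Disjoint fun w : Fin n → ZMod 2 => Cyl n (ext w)) := by
    intro w w' hww'
    rw [Function.onFun, Set.disjoint_left]
    intro x hx hx'
    apply hww'
    funext i
    have h1 := hx i i.isLt
    have h2 := hx' i i.isLt
    rw [h1] at h2
    simpa [hextdef, i.isLt] using h2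
  have hsum : muG Set.univ = ∑' w : Fin n → ZMod 2, muG (Cyl n (ext w)) := by
    rw [← hunion, measure_iUnion hdisj fun w => measurableSet_cyl n (ext w)]
  have hconst : ∀ w : Fin n → ZMod 2, muG (Cyl n (ext w)) = m := fun w => muG_cyl_eq_zero n _
  have hcard : (Fintype.card (Fin n → ZMod 2)) = 2 ^ n := by simp
  have h1 : (1 : ℝ≥0∞) = (2 ^ n : ℕ) * m := by
    rw [← muG_univ, hsum]
    simp only [hconst]
    rw [tsum_fintype]
    rw [Finset.sum_const, Finset.card_univ, hcard, nsmul_eq_mul]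
  have h2n : ((2 ^ n : ℕ) : ℝ≥0∞) = 2 ^ n := by push_cast; ring
  rw [h2n] at h1
  have hne : (2 : ℝ≥0∞) ^ n ≠ 0 := by positivity
  have hnt : (2 : ℝ≥0∞) ^ n ≠ ⊤ := by
    exact ENNReal.pow_ne_top (by norm_num)
  rw [muG_cyl_eq_zero n v, ← hm]
  rw [← ENNReal.inv_pow]
  have : m = (2 ^ n : ℝ≥0∞)⁻¹ * ((2 ^ n : ℝ≥0∞) * m) := by
    rw [← mul_assoc, ENNReal.inv_mul_cancel hne hnt, one_mul]
  rw [this, ← h1, mul_one]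


noncomputable def term (x : ℕ → Bool) (k : ℕ) : ℝ := (if x k then 2 else 0) / 3 ^ (k + 1)

lemma cantorVal_eq (x : ℕ → Bool) : cantorVal x = ∑' k, term x k := rfl

lemma term_nonneg (x : ℕ → Bool) (k : ℕ) : 0 ≤ term x k := by
  unfold term; positivity

lemma term_le (x : ℕ → Bool) (k : ℕ) : term x k ≤ 2 / 3 ^ (k + 1) := by
  unfold term
  split
  · exact le_refl _
  · rw [zero_div]; positivity

lemma two_div_eq (k : ℕ) : (2 : ℝ) / 3 ^ (k + 1) = (2 / 3) * (1 / 3) ^ k := by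
  rw [pow_succ', one_div_pow]
  ring

lemma summable_bound : Summable (fun k : ℕ => (2 : ℝ) / 3 ^ (k + 1)) := by
  have : (fun k : ℕ => (2 : ℝ) / 3 ^ (k + 1)) = fun k => (2 / 3) * (1 / 3) ^ k := by
    funext k; exact two_div_eq k
  rw [this]
  exact (summable_geometric_of_lt_one (by norm_num) (by norm_num)).mul_left _

lemma summable_term (x : ℕ → Bool) : Summable (term x) :=
  Summable.of_nonneg_of_le (term_nonneg x) (term_le x) summable_bound

lemma tsum_bound (m : ℕ) : ∑' k : ℕ, (2 : ℝ) / 3 ^ (k + m + 1) = (1 / 3) ^ m := by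
  have h : ∀ k : ℕ, (2 : ℝ) / 3 ^ (k + m + 1) = (2 / 3 ^ (m + 1)) * (1 / 3) ^ k := by
    intro k
    rw [div_mul_eq_mul_div, mul_comm, ← div_mul_eq_mul_div]
    rw [pow_add, pow_add, one_div_pow]
    field_simp
    ring
  simp_rw [h]
  rw [tsum_mul_left, tsum_geometric_of_lt_one (by norm_num) (by norm_num)]
  rw [pow_succ, one_div_pow]
  field_simp
  ring

noncomputable def pref (m : ℕ) (x : ℕ → Bool) : ℝ := ∑ k ∈ Finset.range m, term x k

lemma tail_bounds (m : ℕ) (x : ℕ → Bool) :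
    pref m x ≤ cantorVal x ∧ cantorVal x ≤ pref m x + (1 / 3) ^ m := by
  have hs := summable_term x
  have hsplit := Summable.sum_add_tsum_nat_add m hs
  have hshift : Summable fun k => term x (k + m) := (summable_nat_add_iff m).2 hs
  have htail0 : 0 ≤ ∑' k, term x (k + m) := tsum_nonneg fun k => term_nonneg x _
  have hboundsh : Summable (fun k : ℕ => (2:ℝ) / 3 ^ (k + m + 1)) := by
    have := (summable_nat_add_iff (f := fun k : ℕ => (2:ℝ)/3^(k+1)) m).2 summable_bound
    simpa using this
  have htail1 : ∑' k, term x (k + m) ≤ (1 / 3) ^ m := by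
    rw [← tsum_bound m]
    exact Summable.tsum_le_tsum (fun k => term_le x (k + m)) hshift hboundsh
  constructor
  · rw [cantorVal_eq, ← hsplit]
    simpa [pref] using htail0
  · rw [cantorVal_eq, ← hsplit]
    simpa [pref] using htail1

lemma abs_pref_le (m : ℕ) (a b : ℕ → Bool) :
    |pref m a - pref m b| ≤ |cantorVal a - cantorVal b| + (1 / 3) ^ m := by
  obtain ⟨ha1, ha2⟩ := tail_bounds m a
  obtain ⟨hb1, hb2⟩ := tail_bounds m b
  have h : |(cantorVal a - pref m a) - (cantorVal b - pref m b)| ≤ (1/3)^m := by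
    rw [abs_le]; constructor <;> nlinarith
  have heq : pref m a - pref m b =
      (cantorVal a - cantorVal b) - ((cantorVal a - pref m a) - (cantorVal b - pref m b)) := by
    ring
  rw [heq]
  calc |(cantorVal a - cantorVal b) - ((cantorVal a - pref m a) - (cantorVal b - pref m b))|
      ≤ |cantorVal a - cantorVal b| + |(cantorVal a - pref m a) - (cantorVal b - pref m b)| :=
        abs_sub _ _
    _ ≤ _ := by linarith

lemma geom_Ico (s m : ℕ) (h : s ≤ m) :
    ∑ k ∈ Finset.Ico s m, (2 : ℝ) / 3 ^ (k + 1) = (1 / 3) ^ s - (1 / 3) ^ m := by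
  induction m, h using Nat.le_induction with
  | base => simp
  | succ n hn ih =>
    rw [Finset.sum_Ico_succ_top hn, ih]
    rw [two_div_eq]
    ring

lemma pref_sep (a b : ℕ → Bool) (j m : ℕ) (hjm : j < m)
    (hab : ∀ i < j, a i = b i) (haj : a j = true) (hbj : b j = false) :
    (1 / 3 : ℝ) ^ (j + 1) + (1 / 3) ^ m ≤ pref m a - pref m b := by
  have hsub : pref m a - pref m b = ∑ k ∈ Finset.range m, (term a k - term b k) := by
    rw [pref, pref, Finset.sum_sub_distrib]
  rw [hsub]
  rw [Finset.range_eq_Ico, ← Finset.sum_Ico_consecutive _ (Nat.zero_le j) (le_of_lt hjm)]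
  have h0 : ∑ k ∈ Finset.Ico 0 j, (term a k - term b k) = 0 := by
    apply Finset.sum_eq_zero
    intro k hk
    rw [Finset.mem_Ico] at hk
    rw [term, term, hab k hk.2]
    ring
  rw [h0, zero_add]
  rw [Finset.sum_eq_sum_Ico_succ_bot hjm]
  have hj : term a j - term b j = 2 / 3 ^ (j + 1) := by
    simp [term, haj, hbj]
  rw [hj]
  have habs : |∑ k ∈ Finset.Ico (j+1) m, (term a k - term b k)| ≤ (1/3)^(j+1) - (1/3)^m := by
    calc |∑ k ∈ Finset.Ico (j+1) m, (term a k - term b k)|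
        ≤ ∑ k ∈ Finset.Ico (j+1) m, |term a k - term b k| := Finset.abs_sum_le_sum_abs _ _
      _ ≤ ∑ k ∈ Finset.Ico (j+1) m, (2:ℝ) / 3 ^ (k+1) := by
          apply Finset.sum_le_sum
          intro k _
          rw [abs_sub_le_iff]
          constructor
          · have := term_le a k; have := term_nonneg b k; linarith
          · have := term_le b k; have := term_nonneg a k; linarith
      _ = (1/3)^(j+1) - (1/3)^m := geom_Ico _ _ hjm
  have hge : -(((1:ℝ)/3)^(j+1) - (1/3)^m) ≤ ∑ k ∈ Finset.Ico (j+1) m, (term a k - term b k) :=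
    neg_le_of_abs_le habs
  have h2 : (2:ℝ) / 3 ^ (j+1) = 2 * (1/3)^(j+1) := by
    rw [div_pow, one_pow]; ring
  linarith

lemma dist_lower (a b : ℕ → Bool) (j m : ℕ) (hjm : j < m)
    (hab : ∀ i < j, a i = b i) (hne : a j ≠ b j) :
    (1 / 3 : ℝ) ^ (j + 1) ≤ |cantorVal a - cantorVal b| := by
  have key : ∀ u v : ℕ → Bool, (∀ i < j, u i = v i) → u j = true → v j = false →
      (1/3:ℝ)^(j+1) ≤ |cantorVal u - cantorVal v| := by
    intro u v huv hu hv
    have h1 := pref_sep u v j m hjm huv hu hv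
    have h2 := abs_pref_le m u v
    have h3 : pref m u - pref m v ≤ |pref m u - pref m v| := le_abs_self _
    linarith
  cases haj : a j
  · cases hbj : b j
    · exact absurd (haj.trans hbj.symm) hne
    · rw [abs_sub_comm]
      exact key b a (fun i hi => (hab i hi).symm) hbj haj
  · cases hbj : b j
    · exact key a b hab haj hbj
    · exact absurd (haj.trans hbj.symm) hne

lemma dist_of_ne_prefix (a b : ℕ → Bool) (m : ℕ) (h : ¬ ∀ i < m, a i = b i) :
    (1 / 3 : ℝ) ^ m ≤ |cantorVal a - cantorVal b| := by
  push_neg at h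
  have hex : ∃ i, i < m ∧ a i ≠ b i := h
  set j := Nat.find hex with hj
  obtain ⟨hjm, hjne⟩ := Nat.find_spec hex
  have hab : ∀ i < j, a i = b i := by
    intro i hi
    by_contra hne
    exact Nat.find_min hex hi ⟨lt_trans hi hjm, hne⟩
  have := dist_lower a b j m hjm hab hjne
  calc (1/3:ℝ)^m ≤ (1/3)^(j+1) := by
        apply pow_le_pow_of_le_one (by norm_num) (by norm_num) hjm
    _ ≤ _ := this


def pval (p : Bool × Bool) : ℤ := (if p.1 then 6 else 0) + (if p.2 then 2 else 0)

lemma pval_spec : ∀ p q r : Bool × Bool, p ≠ q → p ≠ r → q ≠ r →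
    6 ≤ |pval p - pval q| ∨ 6 ≤ |pval p - pval r| ∨ 6 ≤ |pval q - pval r| := by decide

lemma pref_congr (m : ℕ) (a b : ℕ → Bool) (h : ∀ i < m, a i = b i) : pref m a = pref m b :=
  Finset.sum_congr rfl fun k hk => by rw [term, term, h k (Finset.mem_range.mp hk)]

lemma pref_split (m : ℕ) (x : ℕ → Bool) :
    pref (m + 2) x = pref m x + (pval (x m, x (m+1)) : ℝ) / 3 ^ (m + 2) := by
  show pref (m + 1 + 1) x = _
  rw [pref, Finset.sum_range_succ, Finset.sum_range_succ]
  have : ∑ k ∈ Finset.range m, term x k = pref m x := rfl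
  rw [this]
  cases h1 : x m <;> cases h2 : x (m+1) <;>
    simp [term, pval, h1, h2] <;> ring

lemma pair_contra (a b : ℕ → Bool) (m : ℕ) (hm : ∀ i < m, a i = b i)
    (h6 : 6 ≤ |pval (a m, a (m+1)) - pval (b m, b (m+1))|)
    (hd : |cantorVal a - cantorVal b| < (5/9) * (1/3) ^ m) : False := by
  have hpe : pref m a = pref m b := pref_congr m a b hm
  set va := pval (a m, a (m+1)) with hva
  set vb := pval (b m, b (m+1)) with hvb
  have hps : |pref (m+2) a - pref (m+2) b| = |(va : ℝ) - vb| / 3 ^ (m+2) := by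
    rw [pref_split, pref_split, hpe]
    rw [show pref m b + (va:ℝ)/3^(m+2) - (pref m b + (vb:ℝ)/3^(m+2))
        = ((va:ℝ) - vb)/3^(m+2) by ring]
    rw [abs_div, abs_of_pos (by positivity : (0:ℝ) < 3 ^ (m+2))]
  have hcast : (6 : ℝ) ≤ |(va : ℝ) - vb| := by
    rw [show ((va:ℝ) - vb) = ((va - vb : ℤ) : ℝ) by push_cast; ring, ← Int.cast_abs]
    exact_mod_cast h6
  set t : ℝ := 1 / 3 ^ (m+2) with htdef
  have ht : 0 < t := by rw [htdef]; positivity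
  have h1 : 6 * t ≤ |pref (m+2) a - pref (m+2) b| := by
    rw [hps, div_eq_mul_one_div]
    rw [← htdef]
    exact mul_le_mul_of_nonneg_right hcast ht.le
  have h2 := abs_pref_le (m+2) a b
  have h3 : ((1:ℝ)/3)^(m+2) = t := by rw [htdef, div_pow, one_pow]
  have h4 : (5/9:ℝ) * (1/3)^m = 5 * t := by
    rw [htdef, div_pow, one_pow]
    field_simp
    ring
  rw [h3] at h2
  rw [h4] at hd
  linarith

lemma three (x y z : ℕ → Bool) (m : ℕ)
    (hxy : ¬ ∀ i < m + 2, x i = y i) (hxz : ¬ ∀ i < m + 2, x i = z i)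
    (hyz : ¬ ∀ i < m + 2, y i = z i)
    (dxy : |cantorVal x - cantorVal y| < (5/9) * (1/3) ^ m)
    (dxz : |cantorVal x - cantorVal z| < (5/9) * (1/3) ^ m)
    (dyz : |cantorVal y - cantorVal z| < (5/9) * (1/3) ^ m) : False := by
  have hlt : (5/9:ℝ) * (1/3)^m < (1/3)^m := by
    have : (0:ℝ) < (1/3)^m := by positivity
    linarith
  have hagree : ∀ a b : ℕ → Bool, |cantorVal a - cantorVal b| < (5/9) * (1/3) ^ m →
      ∀ i < m, a i = b i := by
    intro a b hd
    by_contra h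
    have := dist_of_ne_prefix a b m h
    linarith
  have haxy := hagree x y dxy
  have haxz := hagree x z dxz
  have hayz := hagree y z dyz
  have hpair : ∀ a b : ℕ → Bool, (∀ i < m, a i = b i) → (¬ ∀ i < m + 2, a i = b i) →
      (a m, a (m+1)) ≠ (b m, b (m+1)) := by
    intro a b hab hne heq
    apply hne
    intro i hi
    rcases Prod.mk.injEq .. ▸ heq with ⟨h1, h2⟩
    rcases Nat.lt_or_ge i m with h | h
    · exact hab i h
    · have : i = m ∨ i = m + 1 := by omega
      rcases this with rfl | rfl
      · exact h1
      · exact h2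
  have p1 := hpair x y haxy hxy
  have p2 := hpair x z haxz hxz
  have p3 := hpair y z hayz hyz
  rcases pval_spec _ _ _ p1 p2 p3 with h | h | h
  · exact pair_contra x y m haxy h dxy
  · exact pair_contra x z m haxz h dxz
  · exact pair_contra y z m hayz h dyz


section Codes

def code (g : G) (k : ℕ) : Bool := decide (g k = 1)

lemma code_eq_iff : ∀ a b : ZMod 2, (decide (a = 1) = decide (b = 1)) ↔ a = b := by decide

noncomputable def f (g : G) : ℝ := cantorVal (code g)

lemma f_continuous : Continuous f := by
  have : f = fun g => ∑' k, term (code g) k := rfl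
  rw [this]
  apply continuous_tsum (u := fun k : ℕ => (2:ℝ) / 3 ^ (k+1))
  · intro k
    have heq : (fun g : G => term (code g) k) =
        (fun a : ZMod 2 => (if decide (a = 1) then (2:ℝ) else 0) / 3 ^ (k+1)) ∘
          (fun g : G => g k) := rfl
    rw [heq]
    exact continuous_of_discreteTopology.comp (continuous_apply k)
  · exact summable_bound
  · intro k g
    rw [Real.norm_eq_abs, abs_of_nonneg (term_nonneg _ _)]
    exact term_le _ _

lemma f_measurable : Measurable f := f_continuous.measurable

lemma mem_cyl_iff_code (n : ℕ) (a b : G) : a ∈ Cyl n b ↔ ∀ i < n, code a i = code b i :=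
  forall₂_congr fun i _ => (code_eq_iff (a i) (b i)).symm

lemma dist_lt_of_mem (s : Set ℝ) (r : ℝ) (hd : EMetric.diam s < ENNReal.ofReal r) {a b : G}
    (ha : a ∈ f ⁻¹' s) (hb : b ∈ f ⁻¹' s) :
    |cantorVal (code a) - cantorVal (code b)| < r := by
  have h1 : edist (f a) (f b) ≤ EMetric.diam s := EMetric.edist_le_diam_of_mem ha hb
  have h2 : edist (f a) (f b) = ENNReal.ofReal |f a - f b| := by
    rw [edist_dist, Real.dist_eq]
  rw [h2] at h1
  exact (ENNReal.ofReal_lt_ofReal_iff_of_nonneg (abs_nonneg _)).mp (lt_of_le_of_lt h1 hd)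

lemma key1 (s : Set ℝ) (m : ℕ) (hd : EMetric.diam s < ENNReal.ofReal ((1/3 : ℝ) ^ m)) :
    muG (f ⁻¹' s) ≤ 2⁻¹ ^ m := by
  rcases Set.eq_empty_or_nonempty (f ⁻¹' s) with h | ⟨x₀, hx₀⟩
  · simp [h]
  · refine (measure_mono ?_).trans (muG_cyl m x₀).le
    intro x hx
    by_contra hc
    have hcode : ¬ ∀ i < m, code x i = code x₀ i := fun h => hc ((mem_cyl_iff_code m x x₀).mpr h)
    have h1 := dist_of_ne_prefix _ _ m hcode
    have h2 := dist_lt_of_mem s _ hd hx hx₀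
    linarith

lemma key2 (s : Set ℝ) (m : ℕ)
    (hd : EMetric.diam s < ENNReal.ofReal ((5/9 : ℝ) * (1/3) ^ m)) :
    muG (f ⁻¹' s) ≤ 2⁻¹ ^ (m + 1) := by
  have hhalf : (2⁻¹ : ℝ≥0∞) ≤ 1 := ENNReal.inv_le_one.mpr one_le_two
  rcases Set.eq_empty_or_nonempty (f ⁻¹' s) with h | ⟨x₀, hx₀⟩
  · simp [h]
  by_cases hall : ∀ x ∈ f ⁻¹' s, x ∈ Cyl (m+2) x₀
  · refine (measure_mono hall).trans ?_
    rw [muG_cyl]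
    rw [show m + 2 = (m+1) + 1 by ring, pow_succ]
    exact mul_le_of_le_one_right zero_le hhalf
  · push_neg at hall
    obtain ⟨x₁, hx₁s, hx₁⟩ := hall
    have hsub : f ⁻¹' s ⊆ Cyl (m+2) x₀ ∪ Cyl (m+2) x₁ := by
      intro x hx
      by_contra hc
      rw [Set.mem_union] at hc
      push_neg at hc
      obtain ⟨h0, h1⟩ := hc
      refine three (code x) (code x₀) (code x₁) m ?_ ?_ ?_ ?_ ?_ ?_
      · exact fun h => h0 ((mem_cyl_iff_code _ _ _).mpr h)
      · exact fun h => h1 ((mem_cyl_iff_code _ _ _).mpr h)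
      · intro h
        exact hx₁ ((mem_cyl_iff_code _ _ _).mpr (fun i hi => (h i hi).symm))
      · exact dist_lt_of_mem s _ hd hx hx₀
      · exact dist_lt_of_mem s _ hd hx hx₁s
      · exact dist_lt_of_mem s _ hd hx₀ hx₁s
    refine (measure_mono hsub).trans ((measure_union_le _ _).trans ?_)
    rw [muG_cyl, muG_cyl]
    have hsum : (2⁻¹ : ℝ≥0∞) ^ (m+2) + 2⁻¹ ^ (m+2) = 2⁻¹ ^ (m+1) := by
      rw [show m + 2 = (m+1) + 1 by ring, pow_succ, ← mul_add]
      have : (2⁻¹ : ℝ≥0∞) + 2⁻¹ = 1 := by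
        rw [← two_mul, ENNReal.mul_inv_cancel two_ne_zero ENNReal.ofNat_ne_top]
      rw [this, mul_one]
    exact hsum.le

end Codes

section Beta

lemma beta_pos : 0 < Real.logb 3 2 := Real.logb_pos (by norm_num) (by norm_num)

lemma third_rpow : (1/3 : ℝ) ^ Real.logb 3 2 = 1/2 := by
  rw [Real.div_rpow zero_le_one (by norm_num : (0:ℝ) ≤ 3), Real.one_rpow,
    Real.rpow_logb (by norm_num) (by norm_num) (by norm_num)]

lemma pow_third_rpow (m : ℕ) : ((1/3 : ℝ) ^ m) ^ Real.logb 3 2 = (1/2) ^ m := by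
  rw [← Real.rpow_natCast (1/3 : ℝ) m, ← Real.rpow_mul (by norm_num), mul_comm,
    Real.rpow_mul (by norm_num), third_rpow, Real.rpow_natCast]

lemma ofReal_half_pow (k : ℕ) : ENNReal.ofReal ((1/2 : ℝ) ^ k) = 2⁻¹ ^ k := by
  rw [ENNReal.ofReal_pow (by norm_num)]
  congr 1
  rw [one_div, ENNReal.ofReal_inv_of_pos (by norm_num)]
  norm_num

end Beta

section Main

lemma main_bound : ∀ s : Set ℝ, EMetric.diam s ≤ ENNReal.ofReal (1/9) →
    (ENNReal.ofReal ((4/9 : ℝ) ^ Real.logb 3 2) • Measure.map f muG) s ≤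
      EMetric.diam s ^ Real.logb 3 2 := by
  intro s hs
  set c := ENNReal.ofReal ((4/9 : ℝ) ^ Real.logb 3 2) with hcdef
  have hβ := beta_pos
  have hc1 : c ≤ 1 := by
    rw [hcdef, ← ENNReal.ofReal_one]
    exact ENNReal.ofReal_le_ofReal (Real.rpow_le_one (by norm_num) (by norm_num) hβ.le)
  have hdtop : EMetric.diam s ≠ ⊤ := (lt_of_le_of_lt hs ENNReal.ofReal_lt_top).ne
  set dr := (EMetric.diam s).toReal with hdrdef
  have hdeq : EMetric.diam s = ENNReal.ofReal dr := (ENNReal.ofReal_toReal hdtop).symm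
  have hdrnn : 0 ≤ dr := ENNReal.toReal_nonneg
  have hdr9 : dr ≤ 1/9 := by
    have := ENNReal.toReal_mono ENNReal.ofReal_ne_top hs
    rwa [ENNReal.toReal_ofReal (by norm_num)] at this
  have hmap : (Measure.map f muG) s ≤ muG (f ⁻¹' closure s) := by
    calc (Measure.map f muG) s ≤ (Measure.map f muG) (closure s) :=
          measure_mono subset_closure
      _ = muG (f ⁻¹' closure s) := Measure.map_apply f_measurable measurableSet_closure
  have hdiamc : EMetric.diam (closure s) = EMetric.diam s := EMetric.diam_closure s
  rw [Measure.smul_apply, smul_eq_mul]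
  rcases eq_or_lt_of_le hdrnn with h0 | h0
  · -- diameter zero
    have hz : muG (f ⁻¹' closure s) = 0 := by
      refine le_antisymm ?_ zero_le
      refine ge_of_tendsto'
        (ENNReal.tendsto_pow_atTop_nhds_zero_of_lt_one
          (by norm_num : (2⁻¹ : ℝ≥0∞) < 1)) ?_ |>.trans (le_refl 0)
      intro m
      refine key1 (closure s) m ?_
      rw [hdiamc, hdeq, ← h0]
      simp only [ENNReal.ofReal_zero]
      exact ENNReal.ofReal_pos.mpr (by positivity)
    have : (Measure.map f muG) s = 0 := le_antisymm (hmap.trans hz.le) zero_le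
    rw [this, mul_zero]
    exact zero_le
  · have hex : ∃ n : ℕ, (1/3 : ℝ) ^ n ≤ dr := by
      obtain ⟨n, hn⟩ := exists_pow_lt_of_lt_one h0 (by norm_num : (1/3 : ℝ) < 1)
      exact ⟨n, hn.le⟩
    have hNspec := Nat.find_spec hex
    have hN0 : Nat.find hex ≠ 0 := by
      intro h
      rw [h, pow_zero] at hNspec
      linarith
    obtain ⟨m, hm⟩ : ∃ m, Nat.find hex = m + 1 :=
      ⟨Nat.find hex - 1, (Nat.succ_pred_eq_of_ne_zero hN0).symm⟩
    have hlow : (1/3 : ℝ) ^ (m+1) ≤ dr := hm ▸ hNspec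
    have hupp : dr < (1/3 : ℝ) ^ m := by
      have := Nat.find_min hex (by omega : m < Nat.find hex)
      linarith [not_le.mp this]
    by_cases hsc : dr < (5/9) * (1/3 : ℝ) ^ m
    · have hk := key2 (closure s) m (by
        rw [hdiamc, hdeq]
        exact (ENNReal.ofReal_lt_ofReal_iff (by positivity)).mpr hsc)
      calc c * (Measure.map f muG) s ≤ 1 * (2⁻¹ ^ (m+1)) := mul_le_mul' hc1 (hmap.trans hk)
        _ = ENNReal.ofReal ((1/2 : ℝ) ^ (m+1)) := by rw [one_mul, ofReal_half_pow]
        _ = ENNReal.ofReal (((1/3 : ℝ) ^ (m+1)) ^ Real.logb 3 2) := by rw [pow_third_rpow]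
        _ ≤ ENNReal.ofReal (dr ^ Real.logb 3 2) :=
            ENNReal.ofReal_le_ofReal (Real.rpow_le_rpow (by positivity) hlow hβ.le)
        _ = EMetric.diam s ^ Real.logb 3 2 := by
            rw [hdeq, ENNReal.ofReal_rpow_of_pos h0]
    · push_neg at hsc
      have hk := key1 (closure s) m (by
        rw [hdiamc, hdeq]
        exact (ENNReal.ofReal_lt_ofReal_iff (by positivity)).mpr hupp)
      calc c * (Measure.map f muG) s ≤ c * 2⁻¹ ^ m := mul_le_mul_right (hmap.trans hk) c
        _ = ENNReal.ofReal ((4/9 : ℝ) ^ Real.logb 3 2 * (1/2) ^ m) := by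
            rw [hcdef, ← ofReal_half_pow, ← ENNReal.ofReal_mul (by positivity)]
        _ ≤ ENNReal.ofReal (((5/9 : ℝ) * (1/3) ^ m) ^ Real.logb 3 2) := by
            apply ENNReal.ofReal_le_ofReal
            rw [Real.mul_rpow (by norm_num) (by positivity), pow_third_rpow]
            exact mul_le_mul_of_nonneg_right
              (Real.rpow_le_rpow (by norm_num) (by norm_num) hβ.le) (by positivity)
        _ ≤ ENNReal.ofReal (dr ^ Real.logb 3 2) :=
            ENNReal.ofReal_le_ofReal (Real.rpow_le_rpow (by positivity) hsc hβ.le)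
        _ = EMetric.diam s ^ Real.logb 3 2 := by
            rw [hdeq, ENNReal.ofReal_rpow_of_pos h0]

end Main

end Stmt13

/-- The middle-third Cantor set, as the set of sums `Σ_{k≥1} 2 x_k / 3^k`, `x_k ∈ {0,1}`. -/
theorem stmt_13 :
    ENNReal.ofReal ((4 / 9 : ℝ) ^ Real.logb 3 2) ≤
      μH[Real.logb 3 2] {y : ℝ | ∃ x : ℕ → Bool, cantorVal x = y} := by
  open Stmt13 in
  have hle : (ENNReal.ofReal ((4/9 : ℝ) ^ Real.logb 3 2) • Measure.map Stmt13.f Stmt13.muG)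
      ≤ μH[Real.logb 3 2] :=
    MeasureTheory.Measure.le_hausdorffMeasure _ _ _ (ENNReal.ofReal_pos.mpr (by norm_num))
      Stmt13.main_bound
  set C : Set ℝ := {y : ℝ | ∃ x : ℕ → Bool, cantorVal x = y} with hC
  have hpre : Stmt13.f ⁻¹' C = Set.univ := by
    ext g
    simp only [Set.mem_preimage, Set.mem_univ, iff_true, hC, Set.mem_setOf_eq]
    exact ⟨Stmt13.code g, rfl⟩
  have h1 : Stmt13.muG (Stmt13.f ⁻¹' C) ≤ (Measure.map Stmt13.f Stmt13.muG) C :=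
    MeasureTheory.Measure.le_map_apply Stmt13.f_measurable.aemeasurable C
  rw [hpre, Stmt13.muG_univ] at h1
  calc ENNReal.ofReal ((4/9 : ℝ) ^ Real.logb 3 2)
      = ENNReal.ofReal ((4/9 : ℝ) ^ Real.logb 3 2) * 1 := (mul_one _).symm
    _ ≤ ENNReal.ofReal ((4/9 : ℝ) ^ Real.logb 3 2) * (Measure.map Stmt13.f Stmt13.muG) C :=
        mul_le_mul_right h1 _
    _ = (ENNReal.ofReal ((4/9 : ℝ) ^ Real.logb 3 2) • Measure.map Stmt13.f Stmt13.muG) C := by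
        rw [Measure.smul_apply, smul_eq_mul]
    _ ≤ μH[Real.logb 3 2] C := MeasureTheory.Measure.le_iff'.mp hle C
end
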